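/- arXiv:2103.00651 — 2 statements merged into one kernel-verified Lean document; each statement's English description precedes it below -/
import Mathlib

section
/- In the setting of the previous ϱ-initialized deviation bound: for every δ ∈ (0,1) and every ε > E_π[‖π̂(X_{0:n−1}) − π‖_p], if n ≥ 2^{2/p}·log(‖ϱ/π‖_{2,π}/δ) / ((ε − E_π[‖π̂(X_{0:n−1}) − π‖_p])²(1−r)²), then P_ϱ(‖π̂(X_{0:n−1}) − π‖_p ≥ ε) ≤ δ. -/
open Finset
open scoped ENNReal Classical BigOperators

/-- Probability mass of a trajectory `x : Fin n → Fin K` under the Markov chain with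
initial distribution `ρ` and transition matrix `Pm`:
`ρ (x 0) * ∏_{k=0}^{n-2} Pm (x k) (x (k+1))`. -/
noncomputable def chainMass {K n : ℕ} (ρ : Fin K → ℝ) (Pm : Fin K → Fin K → ℝ)
    (x : Fin n → Fin K) : ℝ :=
  (if h : 0 < n then ρ (x ⟨0, h⟩) else 1) *
    ∏ k : Fin (n - 1),
      Pm (x ⟨k.1, by have := k.2; omega⟩) (x ⟨k.1 + 1, by have := k.2; omega⟩)

/-- Probability of a set of trajectories under the Markov chain `(Pm, ρ)`. -/
noncomputable def chainProb {K n : ℕ} (ρ : Fin K → ℝ) (Pm : Fin K → Fin K → ℝ)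
    (s : Set (Fin n → Fin K)) : ℝ :=
  ∑ x : Fin n → Fin K, if x ∈ s then chainMass ρ Pm x else 0

/-- Expectation of `g` under the Markov chain `(Pm, ρ)`. -/
noncomputable def chainExp {K n : ℕ} (ρ : Fin K → ℝ) (Pm : Fin K → Fin K → ℝ)
    (g : (Fin n → Fin K) → ℝ) : ℝ :=
  ∑ x : Fin n → Fin K, chainMass ρ Pm x * g x

/-- The nonstationarity index `‖ϱ/π‖_{2,π} = (∑_i ϱ(i)²/π(i))^{1/2}`. -/
noncomputable def nsIndex {K : ℕ} (ϱ π : Fin K → ℝ) : ℝ :=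
  Real.sqrt (∑ i, ϱ i ^ 2 / π i)

/-- The empirical measure `π̂_i(x) = (1/n) ∑_{k} 1(x_k = i)`. -/
noncomputable def empMeas {K n : ℕ} (x : Fin n → Fin K) : Fin K → ℝ :=
  fun i => (∑ k : Fin n, if x k = i then (1 : ℝ) else 0) / n

/-- The `ℓ_p` norm on `ℝ^K` (for a real exponent `p ≥ 1`). -/
noncomputable def lpNorm {K : ℕ} (p : ℝ) (y : Fin K → ℝ) : ℝ :=
  (∑ i, |y i| ^ p) ^ (1 / p)

/-- The Dobrushin (contraction) coefficient `max_{i,j} (1/2) ∑_k |P_{ik} - P_{jk}|`. -/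
noncomputable def dobrushin {K : ℕ} (Pm : Fin K → Fin K → ℝ) : ℝ :=
  ⨆ i, ⨆ j, (1 / 2) * ∑ l, |Pm i l - Pm j l|


section AuxLemmas
open Real

lemma hoeff_core (s : ℝ) (hs0 : 0 ≤ s) (hs1 : s ≤ 1) (u : ℝ) :
    1 - s + s * Real.exp u ≤ Real.exp (s * u + u ^ 2 / 8) := by
  set v : ℝ → ℝ := fun u => 1 - s + s * Real.exp u with hv
  have hvpos : ∀ u, 0 < v u := by
    intro u
    rcases eq_or_lt_of_le hs0 with h | h
    · simp [hv, ← h]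
    · have := Real.exp_pos u
      simp only [hv]
      nlinarith
  set g1 : ℝ → ℝ := fun u => s + u / 4 - s * Real.exp u / v u with hg1
  set g : ℝ → ℝ := fun u => s * u + u ^ 2 / 8 - Real.log (v u) with hg
  have hvd : ∀ u, HasDerivAt v (s * Real.exp u) u := by
    intro u
    exact ((Real.hasDerivAt_exp u).const_mul s).const_add (1 - s)
  have hgd : ∀ u, HasDerivAt g (g1 u) u := by
    intro u
    have h1 : HasDerivAt (fun u : ℝ => Real.log (v u)) (s * Real.exp u / v u) u :=
      (hvd u).log (ne_of_gt (hvpos u))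
    have h2 : HasDerivAt (fun u : ℝ => s * u + u ^ 2 / 8) (s + u / 4) u := by
      have := ((hasDerivAt_pow 2 u).div_const 8).const_add 0
      have h3 : HasDerivAt (fun u : ℝ => s * u) s u := by
        simpa using (hasDerivAt_id u).const_mul s
      have h4 : HasDerivAt (fun u : ℝ => u ^ 2 / 8) (u / 4) u := by
        have := (hasDerivAt_pow 2 u).div_const 8
        exact this.congr_deriv (by norm_num; ring)
      exact h3.add h4
    exact h2.sub h1
  have hg1d : ∀ u, HasDerivAt g1
      (1 / 4 - (s * Real.exp u * v u - s * Real.exp u * (s * Real.exp u)) / (v u) ^ 2) u := by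
    intro u
    have h1 : HasDerivAt (fun u : ℝ => s * Real.exp u) (s * Real.exp u) u :=
      (Real.hasDerivAt_exp u).const_mul s
    have h2 : HasDerivAt (fun u : ℝ => s * Real.exp u / v u)
        ((s * Real.exp u * v u - s * Real.exp u * (s * Real.exp u)) / (v u) ^ 2) u :=
      h1.div (hvd u) (ne_of_gt (hvpos u))
    have h3 : HasDerivAt (fun u : ℝ => s + u / 4) (1 / 4) u := by
      simpa using ((hasDerivAt_id u).div_const 4).const_add s
    exact h3.sub h2
  have hg1deriv_nonneg : ∀ u, 0 ≤ 1 / 4 -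
      (s * Real.exp u * v u - s * Real.exp u * (s * Real.exp u)) / (v u) ^ 2 := by
    intro u
    set q : ℝ := s * Real.exp u / v u with hq
    have hv' := hvpos u
    have hq0 : 0 ≤ q := by positivity
    have hq1 : q ≤ 1 := by
      rw [hq, div_le_one hv']
      have : 0 ≤ 1 - s := by linarith
      simp only [hv]; nlinarith [Real.exp_pos u]
    have key : (s * Real.exp u * v u - s * Real.exp u * (s * Real.exp u)) / (v u) ^ 2
        = q * (1 - q) := by
      rw [hq]; field_simp
    rw [key]
    nlinarith [sq_nonneg (q - 1/2)]
  have hg1mono : Monotone g1 := by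
    apply monotone_of_deriv_nonneg
    · exact fun u => (hg1d u).differentiableAt
    · intro u
      rw [(hg1d u).deriv]
      exact hg1deriv_nonneg u
  have hg10 : g1 0 = 0 := by
    simp [hg1, hv]
  have hgnonneg : ∀ u, 0 ≤ g u := by
    have hdiffg : ∀ u, DifferentiableAt ℝ g u := fun u => (hgd u).differentiableAt
    have hcont : Continuous g :=
      Differentiable.continuous (fun u => hdiffg u : Differentiable ℝ g)
    have hg0 : g 0 = 0 := by simp [hg, hv]
    intro u
    rcases le_total 0 u with h | h
    · have hmono : MonotoneOn g (Set.Ici 0) := by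
        apply monotoneOn_of_deriv_nonneg (convex_Ici 0) (hcont.continuousOn)
        · intro x _; exact (hdiffg x).differentiableWithinAt
        · intro x hx
          rw [(hgd x).deriv]
          rw [interior_Ici] at hx
          have : g1 0 ≤ g1 x := hg1mono (le_of_lt hx)
          linarith [hg10 ▸ this]
      have := hmono (Set.mem_Ici.2 le_rfl) (Set.mem_Ici.2 h) h
      linarith [hg0 ▸ this]
    · have hmono : AntitoneOn g (Set.Iic 0) := by
        apply antitoneOn_of_deriv_nonpos (convex_Iic 0) (hcont.continuousOn)
        · intro x _; exact (hdiffg x).differentiableWithinAt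
        · intro x hx
          rw [(hgd x).deriv]
          rw [interior_Iic] at hx
          have : g1 x ≤ g1 0 := hg1mono (le_of_lt hx)
          linarith [hg10 ▸ this]
      have := hmono (Set.mem_Iic.2 h) (Set.mem_Iic.2 le_rfl) h
      linarith [hg0 ▸ this]
  have hlog : Real.log (v u) ≤ s * u + u ^ 2 / 8 := by
    have := hgnonneg u
    simp only [hg] at this
    linarith
  calc 1 - s + s * Real.exp u = v u := rfl
    _ = Real.exp (Real.log (v u)) := (Real.exp_log (hvpos u)).symm
    _ ≤ Real.exp (s * u + u ^ 2 / 8) := Real.exp_le_exp.2 hlog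

lemma hoeff_sum {ι : Type*} [Fintype ι] (w h : ι → ℝ) (hw : ∀ i, 0 ≤ w i)
    (hw1 : ∑ i, w i = 1) (L : ℝ) (hL : 0 ≤ L) (hosc : ∀ i j, |h i - h j| ≤ L) :
    ∑ i, w i * Real.exp (h i) ≤ Real.exp ((∑ i, w i * h i) + L ^ 2 / 8) := by
  have hne : (Finset.univ : Finset ι).Nonempty := by
    by_contra hempty
    rw [Finset.not_nonempty_iff_eq_empty] at hempty
    rw [hempty] at hw1
    simp at hw1
  set a : ℝ := univ.inf' hne h with ha
  set b : ℝ := univ.sup' hne h with hb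
  have hha : ∀ i, a ≤ h i := fun i => Finset.inf'_le _ (mem_univ i)
  have hhb : ∀ i, h i ≤ b := fun i => Finset.le_sup' _ (mem_univ i)
  have hba : b - a ≤ L := by
    obtain ⟨i, _, hi⟩ := Finset.exists_mem_eq_sup' hne h
    obtain ⟨j, _, hj⟩ := Finset.exists_mem_eq_inf' hne h
    rw [hb, hi, ha, hj]
    calc h i - h j ≤ |h i - h j| := le_abs_self _
      _ ≤ L := hosc i j
  set μ : ℝ := ∑ i, w i * h i with hμ
  have hμa : a ≤ μ := by
    calc a = ∑ i, w i * a := by rw [← Finset.sum_mul, hw1, one_mul]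
      _ ≤ μ := Finset.sum_le_sum fun i _ => mul_le_mul_of_nonneg_left (hha i) (hw i)
  have hμb : μ ≤ b := by
    calc μ ≤ ∑ i, w i * b := Finset.sum_le_sum fun i _ => mul_le_mul_of_nonneg_left (hhb i) (hw i)
      _ = b := by rw [← Finset.sum_mul, hw1, one_mul]
  rcases lt_or_ge a b with hab | hab
  · -- main case a < b
    have hbapos : (0:ℝ) < b - a := by linarith
    set c2 : ℝ := (Real.exp b - Real.exp a) / (b - a) with hc2
    set c1 : ℝ := (b * Real.exp a - a * Real.exp b) / (b - a) with hc1
    have hconv : ∀ i, Real.exp (h i) ≤ c1 + c2 * h i := by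
      intro i
      have hθ1 : (0:ℝ) ≤ (b - h i) / (b - a) := div_nonneg (by linarith [hhb i]) (le_of_lt hbapos)
      have hθ2 : (0:ℝ) ≤ (h i - a) / (b - a) := div_nonneg (by linarith [hha i]) (le_of_lt hbapos)
      have hθs : (b - h i) / (b - a) + (h i - a) / (b - a) = 1 := by
        field_simp
        ring
      have := convexOn_exp.2 (Set.mem_univ a) (Set.mem_univ b) hθ1 hθ2 hθs
      simp only [smul_eq_mul] at this
      have harg : (b - h i) / (b - a) * a + (h i - a) / (b - a) * b = h i := by
        field_simp; ring
      rw [harg] at this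
      calc Real.exp (h i) ≤ (b - h i) / (b - a) * Real.exp a + (h i - a) / (b - a) * Real.exp b :=
            this
        _ = c1 + c2 * h i := by rw [hc1, hc2]; field_simp; ring
    have hsum1 : ∑ i, w i * Real.exp (h i) ≤ c1 + c2 * μ := by
      calc ∑ i, w i * Real.exp (h i) ≤ ∑ i, w i * (c1 + c2 * h i) :=
            Finset.sum_le_sum fun i _ => mul_le_mul_of_nonneg_left (hconv i) (hw i)
        _ = ∑ i, (c1 * w i + c2 * (w i * h i)) := by
            apply Finset.sum_congr rfl; intros; ring
        _ = c1 * (∑ i, w i) + c2 * (∑ i, w i * h i) := by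
            rw [Finset.sum_add_distrib, ← Finset.mul_sum, ← Finset.mul_sum]
        _ = c1 + c2 * μ := by rw [hw1, mul_one]
    set s : ℝ := (μ - a) / (b - a) with hs
    have hs0 : 0 ≤ s := div_nonneg (by linarith) (le_of_lt hbapos)
    have hs1 : s ≤ 1 := by
      rw [hs, div_le_one hbapos]; linarith
    have hkey : c1 + c2 * μ = Real.exp a * (1 - s + s * Real.exp (b - a)) := by
      rw [hc1, hc2, hs]
      have : Real.exp b = Real.exp a * Real.exp (b - a) := by
        rw [← Real.exp_add]; ring_nf
      rw [this]
      field_simp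
      ring
    have hcore := hoeff_core s hs0 hs1 (b - a)
    have hfinal : c1 + c2 * μ ≤ Real.exp (μ + (b - a) ^ 2 / 8) := by
      rw [hkey]
      calc Real.exp a * (1 - s + s * Real.exp (b - a))
          ≤ Real.exp a * Real.exp (s * (b - a) + (b - a) ^ 2 / 8) :=
            mul_le_mul_of_nonneg_left hcore (le_of_lt (Real.exp_pos a))
        _ = Real.exp (a + (s * (b - a) + (b - a) ^ 2 / 8)) := by rw [← Real.exp_add]
        _ = Real.exp (μ + (b - a) ^ 2 / 8) := by
            congr 1
            have : s * (b - a) = μ - a := by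
              rw [hs]; field_simp
            rw [this]; ring
    have hLsq : (b - a) ^ 2 ≤ L ^ 2 := by
      have h0 : 0 ≤ b - a := le_of_lt hbapos
      nlinarith
    calc ∑ i, w i * Real.exp (h i) ≤ c1 + c2 * μ := hsum1
      _ ≤ Real.exp (μ + (b - a) ^ 2 / 8) := hfinal
      _ ≤ Real.exp (μ + L ^ 2 / 8) := Real.exp_le_exp.2 (by linarith)
  · -- degenerate case b ≤ a : all h i equal
    have hall : ∀ i, h i = a := fun i => le_antisymm (le_trans (hhb i) hab) (hha i)
    have hμeq : μ = a := by
      rw [hμ]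
      calc ∑ i, w i * h i = ∑ i, w i * a := by
            apply Finset.sum_congr rfl; intro i _; rw [hall i]
        _ = a := by rw [← Finset.sum_mul, hw1, one_mul]
    have : ∑ i, w i * Real.exp (h i) = Real.exp a := by
      calc ∑ i, w i * Real.exp (h i) = ∑ i, w i * Real.exp a := by
            apply Finset.sum_congr rfl; intro i _; rw [hall i]
        _ = Real.exp a := by rw [← Finset.sum_mul, hw1, one_mul]
    rw [this, hμeq]
    apply Real.exp_le_exp.2
    nlinarith [sq_nonneg L]

noncomputable def Gchain {K n : ℕ} (Pm : Fin K → Fin K → ℝ) (f : (Fin n → Fin K) → ℝ) :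
    ℕ → (Fin n → Fin K) → ℝ
  | 0 => f
  | (t+1) => fun x =>
      if h : t + 2 ≤ n then
        ∑ j, Pm (x ⟨n - t - 2, by omega⟩) j *
          Gchain Pm f t (Function.update x ⟨n - t - 1, by omega⟩ j)
      else f x

lemma wsum_abs_le {ι : Type*} [Fintype ι] (w d : ι → ℝ) (hw : ∀ i, 0 ≤ w i)
    (hw1 : ∑ i, w i = 1) (c : ℝ) (hd : ∀ i, |d i| ≤ c) : |∑ i, w i * d i| ≤ c := by
  calc |∑ i, w i * d i| ≤ ∑ i, |w i * d i| := Finset.abs_sum_le_sum_abs _ _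
    _ = ∑ i, w i * |d i| := by
        apply Finset.sum_congr rfl; intro i _; rw [abs_mul, abs_of_nonneg (hw i)]
    _ ≤ ∑ i, w i * c := Finset.sum_le_sum fun i _ => mul_le_mul_of_nonneg_left (hd i) (hw i)
    _ = c := by rw [← Finset.sum_mul, hw1, one_mul]

lemma signed_bound {ι : Type*} [Fintype ι] [Nonempty ι] (d g : ι → ℝ)
    (hd : ∑ i, d i = 0) (M : ℝ) (hM : 0 ≤ M) (hg : ∀ i j, |g i - g j| ≤ M) :
    |∑ i, d i * g i| ≤ ((1:ℝ)/2 * ∑ i, |d i|) * M := by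
  have hne : (Finset.univ : Finset ι).Nonempty := univ_nonempty
  set gmax : ℝ := univ.sup' hne g with hgmax
  set gmin : ℝ := univ.inf' hne g with hgmin
  have hga : ∀ i, gmin ≤ g i := fun i => Finset.inf'_le _ (mem_univ i)
  have hgb : ∀ i, g i ≤ gmax := fun i => Finset.le_sup' _ (mem_univ i)
  have hosc : gmax - gmin ≤ M := by
    obtain ⟨i, _, hi⟩ := Finset.exists_mem_eq_sup' hne g
    obtain ⟨j, _, hj⟩ := Finset.exists_mem_eq_inf' hne g
    rw [hgmax, hi, hgmin, hj]
    calc g i - g j ≤ |g i - g j| := le_abs_self _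
      _ ≤ M := hg i j
  set mid : ℝ := (gmax + gmin) / 2 with hmid
  have key : ∑ i, d i * g i = ∑ i, d i * (g i - mid) := by
    rw [show (∑ i, d i * (g i - mid)) = (∑ i, d i * g i) - (∑ i, d i) * mid by
      rw [Finset.sum_mul, ← Finset.sum_sub_distrib]
      apply Finset.sum_congr rfl; intros; ring]
    rw [hd]; ring
  rw [key]
  calc |∑ i, d i * (g i - mid)| ≤ ∑ i, |d i * (g i - mid)| := Finset.abs_sum_le_sum_abs _ _
    _ = ∑ i, |d i| * |g i - mid| := by
        apply Finset.sum_congr rfl; intros; rw [abs_mul]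
    _ ≤ ∑ i, |d i| * ((gmax - gmin)/2) := by
        apply Finset.sum_le_sum; intro i _
        apply mul_le_mul_of_nonneg_left _ (abs_nonneg _)
        rw [abs_le]
        constructor <;> [linarith [hga i]; linarith [hgb i]]
    _ = (1/2 * ∑ i, |d i|) * (gmax - gmin) := by rw [← Finset.sum_mul]; ring
    _ ≤ (1/2 * ∑ i, |d i|) * M := by
        apply mul_le_mul_of_nonneg_left hosc
        positivity

lemma Gdep {K n : ℕ} (Pm : Fin K → Fin K → ℝ) (f : (Fin n → Fin K) → ℝ) :
    ∀ (t : ℕ), t + 1 ≤ n → ∀ x y : Fin n → Fin K,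
    (∀ k : Fin n, (k : ℕ) < n - t → x k = y k) → Gchain Pm f t x = Gchain Pm f t y := by
  intro t
  induction t with
  | zero =>
    intro _ x y hxy
    have : x = y := funext fun k => hxy k (by omega)
    rw [this]
  | succ t ih =>
    intro ht x y hxy
    simp only [Gchain]
    rw [dif_pos (by omega : t + 2 ≤ n), dif_pos (by omega : t + 2 ≤ n)]
    have hxm : x ⟨n - t - 2, by omega⟩ = y ⟨n - t - 2, by omega⟩ := hxy _ (by simp; omega)
    rw [hxm]
    apply Finset.sum_congr rfl
    intro j _
    congr 1
    apply ih (by omega)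
    intro k hk
    rcases eq_or_ne k ⟨n - t - 1, by omega⟩ with h | h
    · rw [h]; simp [Function.update_self]
    · rw [Function.update_of_ne h, Function.update_of_ne h]
      apply hxy
      have : (k : ℕ) ≠ n - t - 1 := by
        intro hc; apply h; exact Fin.ext hc
      omega

lemma Gosc {K n : ℕ} (hK : 0 < K) (Pm : Fin K → Fin K → ℝ)
    (hPnn : ∀ i j, 0 ≤ Pm i j) (hProw : ∀ i, ∑ j, Pm i j = 1)
    (r : ℝ) (hrle : ∀ i i', (1:ℝ)/2 * ∑ l, |Pm i l - Pm i' l| ≤ r)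
    (hr0 : 0 ≤ r) (hr1 : r < 1)
    (f : (Fin n → Fin K) → ℝ) (c : ℝ) (hc0 : 0 ≤ c)
    (hf : ∀ (x y : Fin n → Fin K) (q : Fin n), (∀ k : Fin n, k ≠ q → x k = y k) →
      |f x - f y| ≤ c) :
    ∀ t : ℕ, t + 1 ≤ n →
    (∀ (x y : Fin n → Fin K) (q : Fin n), (∀ k : Fin n, k ≠ q → x k = y k) →
      (q : ℕ) ≠ n - 1 - t → |Gchain Pm f t x - Gchain Pm f t y| ≤ c) ∧
    (∀ (x y : Fin n → Fin K) (q : Fin n), (∀ k : Fin n, k ≠ q → x k = y k) →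
      |Gchain Pm f t x - Gchain Pm f t y| ≤ c / (1 - r)) := by
  haveI : Nonempty (Fin K) := ⟨⟨0, hK⟩⟩
  have h1r : (0:ℝ) < 1 - r := by linarith
  have hcle : c ≤ c / (1 - r) := by
    rw [le_div_iff₀ h1r]; nlinarith
  intro t
  induction t with
  | zero =>
    intro _
    refine ⟨fun x y q hxy _ => hf x y q hxy, fun x y q hxy => le_trans (hf x y q hxy) hcle⟩
  | succ t ih =>
    intro ht
    obtain ⟨ihA, ihB⟩ := ih (by omega)
    have ht2 : t + 2 ≤ n := by omega
    set m : Fin n := ⟨n - t - 2, by omega⟩ with hm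
    set m1 : Fin n := ⟨n - t - 1, by omega⟩ with hm1
    have hmm1 : m ≠ m1 := by
      rw [hm, hm1, Ne, Fin.ext_iff]; simp; omega
    -- key per-j bound when x m = y m is NOT assumed; used for the "first sum"
    have hterm : ∀ (x y : Fin n → Fin K) (q : Fin n), (∀ k : Fin n, k ≠ q → x k = y k) →
        (q : ℕ) ≠ n - t - 1 → ∀ j : Fin K,
        |Gchain Pm f t (Function.update x m1 j) - Gchain Pm f t (Function.update y m1 j)| ≤ c := by
      intro x y q hxy hq j
      rcases lt_trichotomy (q : ℕ) (n - t - 1) with hlt | heq | hgt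
      · -- updates differ only at q; q ≠ n - 1 - t
        apply ihA _ _ q _ (by omega)
        intro k hk
        rcases eq_or_ne k m1 with h | h
        · rw [h]; simp
        · rw [Function.update_of_ne h, Function.update_of_ne h]
          exact hxy k hk
      · exact absurd heq hq
      · -- q ≥ n - t : Gchain t doesn't depend on those coords
        have : Gchain Pm f t (Function.update x m1 j) = Gchain Pm f t (Function.update y m1 j) := by
          apply Gdep Pm f t (by omega)
          intro k hk
          rcases eq_or_ne k m1 with h | h
          · rw [h]; simp
          · rw [Function.update_of_ne h, Function.update_of_ne h]
            apply hxy
            intro hc'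
            rw [hc'] at hk
            omega
        rw [this]; simpa using hc0
    have partA : ∀ (x y : Fin n → Fin K) (q : Fin n), (∀ k : Fin n, k ≠ q → x k = y k) →
        (q : ℕ) ≠ n - 1 - (t+1) → |Gchain Pm f (t+1) x - Gchain Pm f (t+1) y| ≤ c := by
      intro x y q hxy hq
      have hq' : (q : ℕ) ≠ n - t - 2 := by omega
      have hxm : x m = y m := by
        apply hxy
        rw [hm, Ne, Fin.ext_iff]
        simp; omega
      simp only [Gchain]
      rw [dif_pos ht2, dif_pos ht2]
      have hrw : (∑ j, Pm (x m) j * Gchain Pm f t (Function.update x m1 j)) -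
          (∑ j, Pm (y m) j * Gchain Pm f t (Function.update y m1 j)) =
          ∑ j, Pm (x m) j * (Gchain Pm f t (Function.update x m1 j) -
            Gchain Pm f t (Function.update y m1 j)) := by
        rw [← Finset.sum_sub_distrib]
        apply Finset.sum_congr rfl
        intro j _
        rw [hxm]; ring
      rcases eq_or_ne (q : ℕ) (n - t - 1) with hqm1 | hqm1
      · -- updates coincide entirely
        have : ∀ j : Fin K, Function.update x m1 j = Function.update y m1 j := by
          intro j
          funext k
          rcases eq_or_ne k m1 with h | h
          · rw [h]; simp
          · rw [Function.update_of_ne h, Function.update_of_ne h]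
            apply hxy
            intro hc'
            apply h
            rw [hc']
            exact Fin.ext hqm1
        show |(∑ j, Pm (x m) j * Gchain Pm f t (Function.update x m1 j)) -
          (∑ j, Pm (y m) j * Gchain Pm f t (Function.update y m1 j))| ≤ c
        rw [hrw]
        apply wsum_abs_le _ _ (fun j => hPnn _ j) (hProw _) c
        intro j
        rw [this j]
        simpa using hc0
      · show |(∑ j, Pm (x m) j * Gchain Pm f t (Function.update x m1 j)) -
          (∑ j, Pm (y m) j * Gchain Pm f t (Function.update y m1 j))| ≤ c
        rw [hrw]
        apply wsum_abs_le _ _ (fun j => hPnn _ j) (hProw _) c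
        intro j
        exact hterm x y q hxy hqm1 j
    refine ⟨partA, ?_⟩
    intro x y q hxy
    rcases eq_or_ne (q : ℕ) (n - 1 - (t+1)) with hq | hq
    swap
    · exact le_trans (partA x y q hxy hq) hcle
    -- main case : q = n - t - 2
    simp only [Gchain]
    rw [dif_pos ht2, dif_pos ht2]
    have hsplit : (∑ j, Pm (x m) j * Gchain Pm f t (Function.update x m1 j)) -
        (∑ j, Pm (y m) j * Gchain Pm f t (Function.update y m1 j)) =
        (∑ j, Pm (x m) j * (Gchain Pm f t (Function.update x m1 j) -
          Gchain Pm f t (Function.update y m1 j))) +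
        (∑ j, (Pm (x m) j - Pm (y m) j) * Gchain Pm f t (Function.update y m1 j)) := by
      rw [← Finset.sum_add_distrib, ← Finset.sum_sub_distrib]
      apply Finset.sum_congr rfl
      intro j _
      ring
    rw [hsplit]
    have hb1 : |∑ j, Pm (x m) j * (Gchain Pm f t (Function.update x m1 j) -
        Gchain Pm f t (Function.update y m1 j))| ≤ c := by
      apply wsum_abs_le _ _ (fun j => hPnn _ j) (hProw _) c
      intro j
      exact hterm x y q hxy (by omega) j
    have hb2 : |∑ j, (Pm (x m) j - Pm (y m) j) * Gchain Pm f t (Function.update y m1 j)| ≤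
        r * (c / (1 - r)) := by
      have hd0 : ∑ j, (Pm (x m) j - Pm (y m) j) = 0 := by
        rw [Finset.sum_sub_distrib, hProw, hProw]; ring
      have hgg : ∀ j j' : Fin K, |Gchain Pm f t (Function.update y m1 j) -
          Gchain Pm f t (Function.update y m1 j')| ≤ c / (1 - r) := by
        intro j j'
        apply ihB _ _ m1
        intro k hk
        rw [Function.update_of_ne hk, Function.update_of_ne hk]
      have := signed_bound (fun j => Pm (x m) j - Pm (y m) j)
        (fun j => Gchain Pm f t (Function.update y m1 j)) hd0 (c / (1 - r))
        (by positivity) hgg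
      apply le_trans this
      apply mul_le_mul_of_nonneg_right (hrle _ _)
      positivity
    calc |(∑ j, Pm (x m) j * (Gchain Pm f t (Function.update x m1 j) -
          Gchain Pm f t (Function.update y m1 j))) +
        (∑ j, (Pm (x m) j - Pm (y m) j) * Gchain Pm f t (Function.update y m1 j))| ≤
        c + r * (c / (1 - r)) := by
          calc |_ + _| ≤ _ + _ := abs_add_le _ _
            _ ≤ c + r * (c / (1 - r)) := add_le_add hb1 hb2
      _ = c / (1 - r) := by field_simp; ring

lemma Gchain_succ' {K n : ℕ} (Pm : Fin K → Fin K → ℝ) (φ : (Fin n → Fin K) → ℝ)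
    (t : ℕ) (ht : t + 2 ≤ n) (a b : Fin n) (hav : (a : ℕ) = n - t - 2)
    (hbv : (b : ℕ) = n - t - 1) (x : Fin n → Fin K) :
    Gchain Pm φ (t+1) x = ∑ j, Pm (x a) j * Gchain Pm φ t (Function.update x b j) := by
  have ha2 : n - t - 2 < n := by omega
  have hb2 : n - t - 1 < n := by omega
  obtain rfl : a = ⟨n - t - 2, ha2⟩ := Fin.ext hav
  obtain rfl : b = ⟨n - t - 1, hb2⟩ := Fin.ext hbv
  simp only [Gchain]
  rw [dif_pos ht]

noncomputable def pMass {K n : ℕ} (ρ : Fin K → ℝ) (Pm : Fin K → Fin K → ℝ) (m : ℕ)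
    (x : Fin n → Fin K) : ℝ :=
  (if h : 0 < n then ρ (x ⟨0, h⟩) else 1) *
    ∏ k ∈ Finset.range (m - 1),
      (if h : k + 1 < n then Pm (x ⟨k, by omega⟩) (x ⟨k + 1, h⟩) else 1)

noncomputable def pinned {K n : ℕ} (i0 : Fin K) (m : ℕ) : Finset (Fin n → Fin K) :=
  Finset.univ.filter (fun x => ∀ k : Fin n, m ≤ (k : ℕ) → x k = i0)

lemma mem_pinned {K n : ℕ} {i0 : Fin K} {m : ℕ} {x : Fin n → Fin K} :
    x ∈ (pinned i0 m : Finset (Fin n → Fin K)) ↔ ∀ k : Fin n, m ≤ (k : ℕ) → x k = i0 := by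
  simp [pinned]

lemma pMass_eq_chainMass {K n : ℕ} (ρ : Fin K → ℝ) (Pm : Fin K → Fin K → ℝ)
    (x : Fin n → Fin K) : pMass ρ Pm n x = chainMass ρ Pm x := by
  unfold pMass chainMass
  congr 1
  rw [← Fin.prod_univ_eq_prod_range
    (fun k => if h : k + 1 < n then Pm (x ⟨k, by omega⟩) (x ⟨k + 1, h⟩) else 1) (n-1)]
  apply Finset.prod_congr rfl
  intro k _
  have hk := k.2
  rw [dif_pos (by omega : (k : ℕ) + 1 < n)]
lemma pMass_update {K n : ℕ} (ρ : Fin K → ℝ) (Pm : Fin K → Fin K → ℝ) (m : ℕ)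
    (hm1 : 1 ≤ m) (hmn : m + 1 ≤ n) (y : Fin n → Fin K) (j : Fin K)
    (b : Fin n) (hbv : (b : ℕ) = m) (a : Fin n) (hav : (a : ℕ) = m - 1) :
      pMass ρ Pm (m+1) (Function.update y b j) = pMass ρ Pm m y * Pm (y a) j := by
  have hn : 0 < n := by omega
  unfold pMass
  rw [dif_pos hn, dif_pos hn]
  have h0 : Function.update y b j ⟨0, hn⟩ = y ⟨0, hn⟩ := by
    apply Function.update_of_ne
    rw [Ne, Fin.ext_iff]; simp [hbv]; omega
  rw [h0]
  rw [show (m + 1) - 1 = (m - 1) + 1 from by omega, Finset.prod_range_succ]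
  have hfac : ∀ k ∈ Finset.range (m - 1),
      (if h : k + 1 < n then
        Pm (Function.update y b j ⟨k, by omega⟩) (Function.update y b j ⟨k + 1, h⟩) else 1) =
      (if h : k + 1 < n then Pm (y ⟨k, by omega⟩) (y ⟨k + 1, h⟩) else 1) := by
    intro k hk
    rw [Finset.mem_range] at hk
    rw [dif_pos (by omega : k + 1 < n), dif_pos (by omega : k + 1 < n)]
    have hne1 : (⟨k, by omega⟩ : Fin n) ≠ b := by
      rw [Ne, Fin.ext_iff]; simp [hbv]; omega
    have hne2 : (⟨k + 1, by omega⟩ : Fin n) ≠ b := by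
      rw [Ne, Fin.ext_iff]; simp [hbv]; omega
    rw [Function.update_of_ne hne1, Function.update_of_ne hne2]
  rw [Finset.prod_congr rfl hfac]
  rw [dif_pos (by omega : (m - 1) + 1 < n)]
  have h1 : Function.update y b j ⟨m - 1, by omega⟩ = y a := by
    have hne : (⟨m - 1, by omega⟩ : Fin n) ≠ b := by
      rw [Ne, Fin.ext_iff]; simp [hbv]; omega
    rw [Function.update_of_ne hne]
    congr 1
    exact (Fin.ext hav).symm
  have h2 : Function.update y b j ⟨m - 1 + 1, by omega⟩ = j := by
    have heq : (⟨m - 1 + 1, by omega⟩ : Fin n) = b := by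
      rw [Fin.ext_iff]; simp [hbv]; omega
    rw [heq, Function.update_self]
  rw [h1, h2]
  ring

lemma peel_step {K n : ℕ} (i0 : Fin K) (ρ : Fin K → ℝ) (Pm : Fin K → Fin K → ℝ)
    (φ : (Fin n → Fin K) → ℝ) (m : ℕ) (hm1 : 1 ≤ m) (hmn : m + 1 ≤ n) :
    ∑ x ∈ (pinned i0 (m+1) : Finset (Fin n → Fin K)),
        pMass ρ Pm (m+1) x * Gchain Pm φ (n - (m+1)) x =
    ∑ y ∈ (pinned i0 m : Finset (Fin n → Fin K)),
        pMass ρ Pm m y * Gchain Pm φ (n - m) y := by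
  have hn : 0 < n := by omega
  have hmn' : m < n := by omega
  have hm1n : m - 1 < n := by omega
  set a : Fin n := ⟨m - 1, hm1n⟩
  set b : Fin n := ⟨m, hmn'⟩
  have hav : (a : ℕ) = m - 1 := rfl
  have hbv : (b : ℕ) = m := rfl
  have hrec : ∀ y : Fin n → Fin K, Gchain Pm φ (n - m) y =
      ∑ j, Pm (y a) j * Gchain Pm φ (n - m - 1) (Function.update y b j) := by
    intro y
    have h := Gchain_succ' Pm φ (n - m - 1) (by omega) a b (by rw [hav]; omega)
      (by rw [hbv]; omega) y
    rw [show (n - m - 1) + 1 = n - m from by omega] at h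
    exact h
  have hRHS : ∑ y ∈ (pinned i0 m : Finset (Fin n → Fin K)), pMass ρ Pm m y * Gchain Pm φ (n - m) y
      = ∑ z ∈ (pinned i0 m : Finset (Fin n → Fin K)) ×ˢ (Finset.univ : Finset (Fin K)),
          pMass ρ Pm (m+1) (Function.update z.1 b z.2) *
            Gchain Pm φ (n - (m+1)) (Function.update z.1 b z.2) := by
    rw [Finset.sum_product]
    apply Finset.sum_congr rfl
    intro y hy
    rw [hrec y, Finset.mul_sum]
    apply Finset.sum_congr rfl
    intro j _
    rw [pMass_update ρ Pm m hm1 hmn y j b hbv a hav,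
      show n - (m+1) = n - m - 1 from by omega]
    ring
  rw [hRHS]
  apply Finset.sum_bij' (i := fun (x : Fin n → Fin K) _ => (Function.update x b i0, x b))
    (j := fun (z : (Fin n → Fin K) × Fin K) _ => Function.update z.1 b z.2)
  · -- i maps into the product set
    intro x hx
    rw [Finset.mem_product]
    refine ⟨?_, Finset.mem_univ _⟩
    rw [mem_pinned]
    intro k hk
    rcases eq_or_ne k b with h | h
    · show Function.update x b i0 k = i0
      rw [h, Function.update_self]
    · show Function.update x b i0 k = i0
      rw [Function.update_of_ne h]
      exact (mem_pinned.1 hx) k (by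
        have : (k : ℕ) ≠ m := by
          intro hc; apply h; apply Fin.ext; rw [hbv, hc]
        omega)
  · -- j maps into pinned (m+1)
    intro z hz
    rw [Finset.mem_product] at hz
    rw [mem_pinned]
    intro k hk
    have hne : k ≠ b := by
      rw [Ne, Fin.ext_iff, hbv]; omega
    rw [Function.update_of_ne hne]
    exact (mem_pinned.1 hz.1) k (by omega)
  · -- left inverse : j (i x) = x
    intro x hx
    show Function.update (Function.update x b i0) b (x b) = x
    rw [Function.update_idem, Function.update_eq_self]
  · -- right inverse : i (j z) = z
    intro z hz
    rw [Finset.mem_product] at hz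
    have hyb : z.1 b = i0 := (mem_pinned.1 hz.1) b (by rw [hbv])
    have h1 : Function.update (Function.update z.1 b z.2) b i0 = z.1 := by
      rw [Function.update_idem, ← hyb, Function.update_eq_self]
    have h2 : Function.update z.1 b z.2 b = z.2 := Function.update_self _ _ _
    show (Function.update (Function.update z.1 b z.2) b i0, Function.update z.1 b z.2 b) = z
    rw [h1, h2]
  · -- summands agree
    intro x hx
    show _ = pMass ρ Pm (m+1) (Function.update (Function.update x b i0) b (x b)) *
        Gchain Pm φ (n - (m+1)) (Function.update (Function.update x b i0) b (x b))
    rw [Function.update_idem, Function.update_eq_self]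

lemma master {K n : ℕ} (hn : 0 < n) (i0 : Fin K) (ρ : Fin K → ℝ) (Pm : Fin K → Fin K → ℝ)
    (φ : (Fin n → Fin K) → ℝ) :
    ∀ d : ℕ, d + 1 ≤ n →
    (∑ x : Fin n → Fin K, chainMass ρ Pm x * φ x) =
    ∑ x ∈ (pinned i0 (n - d) : Finset (Fin n → Fin K)), pMass ρ Pm (n - d) x * Gchain Pm φ d x := by
  intro d
  induction d with
  | zero =>
    intro _
    have huniv : (pinned i0 (n - 0) : Finset (Fin n → Fin K)) = Finset.univ := by
      apply Finset.eq_univ_iff_forall.2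
      intro x
      rw [mem_pinned]
      intro k hk
      exact absurd k.2 (by omega)
    rw [huniv]
    apply Finset.sum_congr rfl
    intro x _
    rw [show n - 0 = n from rfl, pMass_eq_chainMass]
    rfl
  | succ d ih =>
    intro hd
    have hm1' : 1 ≤ n - d - 1 := by omega
    have hmn' : (n - d - 1) + 1 ≤ n := by omega
    have hp := peel_step i0 ρ Pm φ (n - d - 1) hm1' hmn'
    rw [show n - d - 1 + 1 = n - d from by omega] at hp
    rw [show n - (n - d) = d from by omega] at hp
    rw [show n - (n - d - 1) = d + 1 from by omega] at hp
    rw [show n - (d + 1) = n - d - 1 from by omega]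
    exact (ih (by omega)).trans hp

lemma chainExp_eq_init {K n : ℕ} (hn : 0 < n) (i0 : Fin K) (ρ : Fin K → ℝ)
    (Pm : Fin K → Fin K → ℝ) (φ : (Fin n → Fin K) → ℝ) :
    (∑ x : Fin n → Fin K, chainMass ρ Pm x * φ x) =
    ∑ i : Fin K, ρ i * Gchain Pm φ (n - 1) (Function.update (fun _ => i0) (⟨0, hn⟩ : Fin n) i) := by
  have h := master hn i0 ρ Pm φ (n - 1) (by omega)
  rw [show n - (n - 1) = 1 from by omega] at h
  rw [h]
  have hpm1 : ∀ x : Fin n → Fin K, pMass ρ Pm 1 x = ρ (x ⟨0, hn⟩) := by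
    intro x
    unfold pMass
    rw [dif_pos hn]
    simp
  apply Finset.sum_bij' (i := fun (x : Fin n → Fin K) _ => x ⟨0, hn⟩)
    (j := fun (i : Fin K) _ => Function.update (fun _ => i0) (⟨0, hn⟩ : Fin n) i)
  · intro x hx
    exact Finset.mem_univ _
  · intro i _
    rw [mem_pinned]
    intro k hk
    rw [Function.update_of_ne (by rw [Ne, Fin.ext_iff]; simp; omega)]
  · -- left inverse
    intro x hx
    funext k
    rcases eq_or_ne k (⟨0, hn⟩ : Fin n) with h | h
    · rw [h, Function.update_self]
    · rw [Function.update_of_ne h]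
      have hk : 1 ≤ (k : ℕ) := by
        rcases Nat.eq_zero_or_pos (k : ℕ) with h0 | h0
        · exact absurd (Fin.ext h0 : k = ⟨0, hn⟩) h
        · omega
      exact ((mem_pinned.1 hx) k hk).symm
  · -- right inverse
    intro i _
    exact Function.update_self _ _ _
  · intro x hx
    rw [hpm1 x]
    congr 1
    apply Gdep Pm φ (n - 1) (by omega)
    intro k hk
    have : k = (⟨0, hn⟩ : Fin n) := Fin.ext (by simp; omega)
    rw [this, Function.update_self]

lemma Gconst {K n : ℕ} (Pm : Fin K → Fin K → ℝ) (hProw : ∀ i, ∑ j, Pm i j = 1) :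
    ∀ t (x : Fin n → Fin K), Gchain Pm (fun _ => (1:ℝ)) t x = 1 := by
  intro t
  induction t with
  | zero => intro x; rfl
  | succ t ih =>
    intro x
    simp only [Gchain]
    by_cases h : t + 2 ≤ n
    · rw [dif_pos h]
      simp only [ih, mul_one]
      exact hProw _
    · rw [dif_neg h]

lemma Gev0 {K n : ℕ} (hn : 0 < n) (Pm : Fin K → Fin K → ℝ)
    (hProw : ∀ i, ∑ j, Pm i j = 1) (ψ : Fin K → ℝ) :
    ∀ t, t + 1 ≤ n → ∀ x : Fin n → Fin K,
      Gchain Pm (fun z => ψ (z ⟨0, hn⟩)) t x = ψ (x ⟨0, hn⟩) := by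
  intro t
  induction t with
  | zero => intro _ x; rfl
  | succ t ih =>
    intro ht x
    simp only [Gchain]
    rw [dif_pos (by omega : t + 2 ≤ n)]
    have hupd : ∀ j : Fin K,
        Gchain Pm (fun z => ψ (z ⟨0, hn⟩)) t
          (Function.update x (⟨n - t - 1, by omega⟩ : Fin n) j) = ψ (x ⟨0, hn⟩) := by
      intro j
      rw [ih (by omega)]
      congr 1
      rw [Function.update_of_ne (by rw [Ne, Fin.ext_iff]; simp; omega)]
    calc ∑ j, Pm (x ⟨n - t - 2, by omega⟩) j *
          Gchain Pm (fun z => ψ (z ⟨0, hn⟩)) t (Function.update x ⟨n - t - 1, by omega⟩ j)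
        = ∑ j, Pm (x ⟨n - t - 2, by omega⟩) j * ψ (x ⟨0, hn⟩) := by
          apply Finset.sum_congr rfl; intro j _; rw [hupd j]
      _ = ψ (x ⟨0, hn⟩) := by rw [← Finset.sum_mul, hProw, one_mul]

lemma Gmgf {K n : ℕ} (Pm : Fin K → Fin K → ℝ)
    (hPnn : ∀ i j, 0 ≤ Pm i j) (hProw : ∀ i, ∑ j, Pm i j = 1)
    (f : (Fin n → Fin K) → ℝ) (l cb : ℝ) (hcb : 0 ≤ cb)
    (hosc : ∀ t, t + 1 ≤ n → ∀ (x y : Fin n → Fin K) (q : Fin n),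
      (∀ k : Fin n, k ≠ q → x k = y k) → |Gchain Pm f t x - Gchain Pm f t y| ≤ cb) :
    ∀ t, t + 1 ≤ n → ∀ x : Fin n → Fin K,
      Gchain Pm (fun z => Real.exp (l * f z)) t x ≤
        Real.exp (l * Gchain Pm f t x + t * (l ^ 2 * cb ^ 2 / 8)) := by
  intro t
  induction t with
  | zero =>
    intro _ x
    show Real.exp (l * f x) ≤ Real.exp (l * f x + (0:ℕ) * (l ^ 2 * cb ^ 2 / 8))
    simp
  | succ t ih =>
    intro ht x
    have ht2 : t + 2 ≤ n := by omega
    have ha : n - t - 2 < n := by omega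
    have hb : n - t - 1 < n := by omega
    set a : Fin n := ⟨n - t - 2, ha⟩
    set b : Fin n := ⟨n - t - 1, hb⟩
    rw [Gchain_succ' Pm (fun z => Real.exp (l * f z)) t ht2 a b rfl rfl x,
        Gchain_succ' Pm f t ht2 a b rfl rfl x]
    set C : ℝ := l ^ 2 * cb ^ 2 / 8 with hC
    set g : Fin K → ℝ := fun j => Gchain Pm f t (Function.update x b j) with hg
    have step1 : ∑ j, Pm (x a) j * Gchain Pm (fun z => Real.exp (l * f z)) t
        (Function.update x b j) ≤ ∑ j, Pm (x a) j * Real.exp (l * g j + t * C) := by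
      apply Finset.sum_le_sum
      intro j _
      exact mul_le_mul_of_nonneg_left (ih (by omega) _) (hPnn _ j)
    have step2 : ∑ j, Pm (x a) j * Real.exp (l * g j + t * C) =
        Real.exp (t * C) * ∑ j, Pm (x a) j * Real.exp (l * g j) := by
      rw [Finset.mul_sum]
      apply Finset.sum_congr rfl
      intro j _
      rw [Real.exp_add]
      ring
    have hosc' : ∀ j j' : Fin K, |l * g j - l * g j'| ≤ |l| * cb := by
      intro j j'
      rw [← mul_sub, abs_mul]
      apply mul_le_mul_of_nonneg_left _ (abs_nonneg l)
      apply hosc t (by omega) _ _ b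
      intro k hk
      rw [Function.update_of_ne hk, Function.update_of_ne hk]
    have step3 : ∑ j, Pm (x a) j * Real.exp (l * g j) ≤
        Real.exp ((∑ j, Pm (x a) j * (l * g j)) + (|l| * cb) ^ 2 / 8) :=
      hoeff_sum (Pm (x a)) (fun j => l * g j) (fun j => hPnn _ j) (hProw _)
        (|l| * cb) (by positivity) hosc'
    have hsum : ∑ j, Pm (x a) j * (l * g j) = l * ∑ j, Pm (x a) j * g j := by
      rw [Finset.mul_sum]
      apply Finset.sum_congr rfl
      intro j _
      ring
    have habs : (|l| * cb) ^ 2 = l ^ 2 * cb ^ 2 := by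
      rw [mul_pow, sq_abs]
    calc ∑ j, Pm (x a) j * Gchain Pm (fun z => Real.exp (l * f z)) t (Function.update x b j)
        ≤ Real.exp (t * C) * ∑ j, Pm (x a) j * Real.exp (l * g j) := by
          rw [← step2]; exact step1
      _ ≤ Real.exp (t * C) * Real.exp ((∑ j, Pm (x a) j * (l * g j)) + (|l| * cb) ^ 2 / 8) :=
          mul_le_mul_of_nonneg_left step3 (le_of_lt (Real.exp_pos _))
      _ = Real.exp (l * (∑ j, Pm (x a) j * g j) + (t + 1 : ℕ) * C) := by
          rw [← Real.exp_add, hsum, habs]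
          congr 1
          push_cast
          rw [hC]
          ring

lemma lpNorm_triangle {K : ℕ} (p : ℝ) (hp : 1 ≤ p) (a b : Fin K → ℝ) :
    lpNorm p (fun i => a i + b i) ≤ lpNorm p a + lpNorm p b :=
  Real.Lp_add_le Finset.univ a b hp

lemma lpNorm_nonneg {K : ℕ} (p : ℝ) (y : Fin K → ℝ) : 0 ≤ lpNorm p y := by
  unfold lpNorm
  positivity

lemma lpNorm_sub_comm {K : ℕ} (p : ℝ) (a b : Fin K → ℝ) :
    lpNorm p (fun i => a i - b i) = lpNorm p (fun i => b i - a i) := by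
  unfold lpNorm
  congr 1
  apply Finset.sum_congr rfl
  intro i _
  rw [abs_sub_comm]

lemma abs_lpNorm_sub (p : ℝ) (hp : 1 ≤ p) {K : ℕ} (u v : Fin K → ℝ) :
    |lpNorm p u - lpNorm p v| ≤ lpNorm p (fun i => u i - v i) := by
  rw [abs_le]
  constructor
  · have h := lpNorm_triangle p hp (fun i => v i - u i) u
    have he : lpNorm p (fun i => v i - u i + u i) = lpNorm p v := by
      congr 1; funext i; ring
    rw [he] at h
    rw [lpNorm_sub_comm p v u] at h
    linarith
  · have h := lpNorm_triangle p hp (fun i => u i - v i) v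
    have he : lpNorm p (fun i => u i - v i + v i) = lpNorm p u := by
      congr 1; funext i; ring
    rw [he] at h
    linarith

lemma bdd_diff {K n : ℕ} (hn : 0 < n) (p : ℝ) (hp : 1 ≤ p) (pj : Fin K → ℝ)
    (x y : Fin n → Fin K) (q : Fin n) (hxy : ∀ k : Fin n, k ≠ q → x k = y k) :
    |lpNorm p (fun i => empMeas x i - pj i) - lpNorm p (fun i => empMeas y i - pj i)| ≤
      (2:ℝ) ^ (1/p) / n := by
  have hp0 : 0 < p := lt_of_lt_of_le one_pos hp
  have hn0 : (0:ℝ) < n := by exact_mod_cast hn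
  have h1 := abs_lpNorm_sub p hp (fun i => empMeas x i - pj i) (fun i => empMeas y i - pj i)
  have he : (fun i => (empMeas x i - pj i) - (empMeas y i - pj i)) =
      fun i => empMeas x i - empMeas y i := by funext i; ring
  rw [he] at h1
  refine h1.trans ?_
  -- compute the difference of empirical measures
  have hd : ∀ i, empMeas x i - empMeas y i =
      ((if x q = i then (1:ℝ) else 0) - (if y q = i then (1:ℝ) else 0)) / n := by
    intro i
    unfold empMeas
    rw [div_sub_div_same]
    congr 1
    rw [← Finset.sum_sub_distrib]
    apply Finset.sum_eq_single_of_mem q (Finset.mem_univ q)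
    intro k _ hk
    rw [hxy k hk]
    ring
  have habs : ∀ i, |empMeas x i - empMeas y i| ≤ 1/(n:ℝ) := by
    intro i
    rw [hd i, abs_div, abs_of_nonneg (le_of_lt hn0)]
    apply (div_le_div_iff_of_pos_right hn0).2
    split_ifs <;> norm_num
  have hzero : ∀ i, ¬(x q = i) → ¬(y q = i) → empMeas x i - empMeas y i = 0 := by
    intro i h1 h2
    rw [hd i, if_neg h1, if_neg h2]
    ring
  have hsum : ∑ i, |empMeas x i - empMeas y i| ^ p ≤ 2 * (1/(n:ℝ)) ^ p := by
    have hbound : ∀ i : Fin K, |empMeas x i - empMeas y i| ^ p ≤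
        (if x q = i then (1/(n:ℝ)) ^ p else 0) + (if y q = i then (1/(n:ℝ)) ^ p else 0) := by
      intro i
      by_cases hix : x q = i
      · have h1 : |empMeas x i - empMeas y i| ^ p ≤ (1/(n:ℝ)) ^ p :=
          Real.rpow_le_rpow (abs_nonneg _) (habs i) (le_of_lt hp0)
        have h2 : (0:ℝ) ≤ (if y q = i then (1/(n:ℝ)) ^ p else 0) := by positivity
        rw [if_pos hix]
        linarith
      · by_cases hiy : y q = i
        · have h1 : |empMeas x i - empMeas y i| ^ p ≤ (1/(n:ℝ)) ^ p :=
            Real.rpow_le_rpow (abs_nonneg _) (habs i) (le_of_lt hp0)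
          rw [if_neg hix, if_pos hiy]
          linarith
        · rw [if_neg hix, if_neg hiy, hzero i hix hiy]
          rw [abs_zero, Real.zero_rpow (ne_of_gt hp0)]
          norm_num
    calc ∑ i, |empMeas x i - empMeas y i| ^ p
        ≤ ∑ i : Fin K, ((if x q = i then (1/(n:ℝ)) ^ p else 0) +
            (if y q = i then (1/(n:ℝ)) ^ p else 0)) :=
          Finset.sum_le_sum fun i _ => hbound i
      _ = (1/(n:ℝ)) ^ p + (1/(n:ℝ)) ^ p := by
          rw [Finset.sum_add_distrib, Finset.sum_ite_eq, Finset.sum_ite_eq]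
          simp
      _ = 2 * (1/(n:ℝ)) ^ p := by ring
  have hfin : lpNorm p (fun i => empMeas x i - empMeas y i) ≤ (2:ℝ) ^ (1/p) / n := by
    unfold lpNorm
    have h1 : (∑ i, |empMeas x i - empMeas y i| ^ p) ^ (1/p) ≤
        (2 * (1/(n:ℝ)) ^ p) ^ (1/p) := by
      apply Real.rpow_le_rpow _ hsum (by positivity)
      apply Finset.sum_nonneg
      intro i _
      positivity
    refine h1.trans_eq ?_
    rw [Real.mul_rpow (by norm_num) (by positivity)]
    rw [← Real.rpow_mul (by positivity : (0:ℝ) ≤ 1/(n:ℝ))]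
    rw [mul_one_div_cancel (ne_of_gt hp0), Real.rpow_one]
    rw [mul_one_div]
  exact hfin

end AuxLemmas

set_option maxHeartbeats 2000000 in
theorem stmt14 {K n : ℕ} (hK : 0 < K) (hn : 0 < n)
    (Pm : Fin K → Fin K → ℝ)
    (hPnn : ∀ i j, 0 ≤ Pm i j) (hProw : ∀ i, ∑ j, Pm i j = 1)
    (r : ℝ) (hrdef : r = dobrushin Pm) (hr : r < 1)
    (ϱ : Fin K → ℝ) (hϱnn : ∀ i, 0 ≤ ϱ i) (hϱsum : ∑ i, ϱ i = 1)
    (π : Fin K → ℝ) (hπpos : ∀ i, 0 < π i) (hπsum : ∑ i, π i = 1)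
    (hπstat : ∀ j, ∑ i, π i * Pm i j = π j)
    (p : ℝ) (hp : 1 ≤ p) (δ : ℝ) (hδ : δ ∈ Set.Ioo (0 : ℝ) 1) (ε : ℝ)
    (hε : chainExp π Pm (fun x' : Fin n → Fin K => lpNorm p (fun i => empMeas x' i - π i)) < ε)
    (hsample : (n : ℝ) ≥ (2 : ℝ) ^ (2 / p) * Real.log (nsIndex ϱ π / δ) /
      ((ε - chainExp π Pm
          (fun x' : Fin n → Fin K => lpNorm p (fun i => empMeas x' i - π i))) ^ 2 *
        (1 - r) ^ 2)) :
    chainProb ϱ Pm {x : Fin n → Fin K | ε ≤ lpNorm p (fun i => empMeas x i - π i)} ≤ δ := by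

  classical
  haveI : Nonempty (Fin K) := ⟨⟨0, hK⟩⟩
  set i0 : Fin K := ⟨0, hK⟩ with hi0
  set f : (Fin n → Fin K) → ℝ := fun x => lpNorm p (fun i => empMeas x i - π i) with hfdef
  set E : ℝ := chainExp π Pm f with hE
  set t0 : ℝ := ε - E with ht0
  have hts : 0 < t0 := by rw [ht0]; linarith [hε]
  have hp0 : 0 < p := lt_of_lt_of_le one_pos hp
  have hn0R : (0:ℝ) < n := by exact_mod_cast hn
  -- Dobrushin coefficient facts
  have hbdd1 : ∀ i : Fin K, BddAbove (Set.range fun j => (1:ℝ) / 2 * ∑ l, |Pm i l - Pm j l|) :=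
    fun i => Set.Finite.bddAbove (Set.finite_range _)
  have hbdd2 : BddAbove (Set.range fun i => ⨆ j, (1:ℝ) / 2 * ∑ l, |Pm i l - Pm j l|) :=
    Set.Finite.bddAbove (Set.finite_range _)
  have hrle : ∀ i i' : Fin K, (1:ℝ)/2 * ∑ l, |Pm i l - Pm i' l| ≤ r := by
    intro i i'
    rw [hrdef]
    unfold dobrushin
    calc (1:ℝ)/2 * ∑ l, |Pm i l - Pm i' l|
        ≤ ⨆ j, (1:ℝ)/2 * ∑ l, |Pm i l - Pm j l| := le_ciSup (hbdd1 i) i'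
      _ ≤ ⨆ i, ⨆ j, (1:ℝ)/2 * ∑ l, |Pm i l - Pm j l| := le_ciSup hbdd2 i
  have hr0 : 0 ≤ r := by
    have h := hrle i0 i0
    simpa using h
  have h1r : 0 < 1 - r := by linarith
  set c : ℝ := (2:ℝ) ^ (1/p) / n with hc
  have hc0 : 0 < c := by
    rw [hc]; positivity
  set cb : ℝ := c / (1 - r) with hcb
  have hcb0 : 0 < cb := div_pos hc0 h1r
  have hbd : ∀ (x y : Fin n → Fin K) (q : Fin n), (∀ k : Fin n, k ≠ q → x k = y k) →
      |f x - f y| ≤ c := fun x y q hxy => bdd_diff hn p hp π x y q hxy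
  have hGosc := Gosc hK Pm hPnn hProw r hrle hr0 hr f c (le_of_lt hc0) hbd
  have hoscB : ∀ t, t + 1 ≤ n → ∀ (x y : Fin n → Fin K) (q : Fin n),
      (∀ k : Fin n, k ≠ q → x k = y k) →
      |Gchain Pm f t x - Gchain Pm f t y| ≤ cb := fun t ht => (hGosc t ht).2
  set y0 : Fin K → (Fin n → Fin K) :=
    fun i => Function.update (fun _ => i0) (⟨0, hn⟩ : Fin n) i with hy0
  have hEeq : E = ∑ i, π i * Gchain Pm f (n-1) (y0 i) := by
    rw [hE]
    exact chainExp_eq_init hn i0 π Pm f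
  have hcast : ((n-1 : ℕ) : ℝ) = (n:ℝ) - 1 := by
    rw [Nat.cast_sub (by omega : 1 ≤ n)]
    norm_num
  -- the moment generating function bound
  have hmgf : ∀ l : ℝ, chainExp π Pm (fun x => Real.exp (l * f x)) ≤
      Real.exp (l * E + n * (l^2 * cb^2 / 8)) := by
    intro l
    have h1 : chainExp π Pm (fun x => Real.exp (l * f x)) =
        ∑ i, π i * Gchain Pm (fun x => Real.exp (l * f x)) (n-1) (y0 i) :=
      chainExp_eq_init hn i0 π Pm _
    rw [h1]
    have hn1 : (n - 1) + 1 ≤ n := by omega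
    set g : Fin K → ℝ := fun i => Gchain Pm f (n-1) (y0 i) with hg
    have step1 : ∑ i, π i * Gchain Pm (fun x => Real.exp (l * f x)) (n-1) (y0 i) ≤
        ∑ i, π i * Real.exp (l * g i + (n-1 : ℕ) * (l^2*cb^2/8)) :=
      Finset.sum_le_sum fun i _ => mul_le_mul_of_nonneg_left
        (Gmgf Pm hPnn hProw f l cb hcb0.le hoscB (n-1) hn1 (y0 i)) (hπpos i).le
    have step2 : ∑ i, π i * Real.exp (l * g i + (n-1:ℕ) * (l^2*cb^2/8)) =
        Real.exp ((n-1:ℕ) * (l^2*cb^2/8)) * ∑ i, π i * Real.exp (l * g i) := by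
      rw [Finset.mul_sum]
      apply Finset.sum_congr rfl
      intro i _
      rw [Real.exp_add]
      ring
    have hoscg : ∀ i i', |l * g i - l * g i'| ≤ |l| * cb := by
      intro i i'
      rw [← mul_sub, abs_mul]
      apply mul_le_mul_of_nonneg_left _ (abs_nonneg l)
      apply hoscB (n-1) hn1 _ _ (⟨0, hn⟩ : Fin n)
      intro k hk
      show Function.update (fun _ => i0) (⟨0, hn⟩ : Fin n) i k =
        Function.update (fun _ => i0) (⟨0, hn⟩ : Fin n) i' k
      rw [Function.update_of_ne hk, Function.update_of_ne hk]
    have step3 := hoeff_sum π (fun i => l * g i) (fun i => (hπpos i).le) hπsum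
      (|l| * cb) (by positivity) hoscg
    have hsum : ∑ i, π i * (l * g i) = l * E := by
      rw [hEeq, Finset.mul_sum]
      apply Finset.sum_congr rfl
      intro i _
      ring
    have habs : (|l| * cb) ^ 2 = l ^ 2 * cb ^ 2 := by rw [mul_pow, sq_abs]
    calc ∑ i, π i * Gchain Pm (fun x => Real.exp (l * f x)) (n-1) (y0 i)
        ≤ Real.exp ((n-1:ℕ) * (l^2*cb^2/8)) * ∑ i, π i * Real.exp (l * g i) := by
          rw [← step2]; exact step1
      _ ≤ Real.exp ((n-1:ℕ) * (l^2*cb^2/8)) *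
          Real.exp ((∑ i, π i * (l * g i)) + (|l| * cb)^2/8) :=
          mul_le_mul_of_nonneg_left step3 (Real.exp_pos _).le
      _ = Real.exp (l * E + n * (l^2 * cb^2 / 8)) := by
          rw [← Real.exp_add, hsum, habs]
          congr 1
          rw [hcast]
          ring
  -- nonnegativity of chain masses
  have hmassnn : ∀ (ρ' : Fin K → ℝ), (∀ i, 0 ≤ ρ' i) → ∀ x : Fin n → Fin K,
      0 ≤ chainMass ρ' Pm x := by
    intro ρ' hρ x
    unfold chainMass
    rw [dif_pos hn]
    exact mul_nonneg (hρ _) (Finset.prod_nonneg fun k _ => hPnn _ _)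
  set Aset : Set (Fin n → Fin K) := {x | ε ≤ f x} with hAdef
  set l : ℝ := 4 * t0 / ((n:ℝ) * cb^2) with hl
  have hl0 : 0 ≤ l := by
    rw [hl]
    positivity
  -- Markov / Chernoff under the stationary initial distribution
  have hmkv : chainProb π Pm Aset ≤
      Real.exp (-(l * ε)) * chainExp π Pm (fun x => Real.exp (l * f x)) := by
    unfold chainProb chainExp
    rw [Finset.mul_sum]
    apply Finset.sum_le_sum
    intro x _
    by_cases hx : x ∈ Aset
    · rw [if_pos hx]
      have hfx : ε ≤ f x := hx
      have hone : (1:ℝ) ≤ Real.exp (-(l*ε)) * Real.exp (l * f x) := by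
        rw [← Real.exp_add]
        rw [show (1:ℝ) = Real.exp 0 from (Real.exp_zero).symm]
        apply Real.exp_le_exp.2
        nlinarith
      calc chainMass π Pm x = chainMass π Pm x * 1 := (mul_one _).symm
        _ ≤ chainMass π Pm x * (Real.exp (-(l*ε)) * Real.exp (l * f x)) :=
            mul_le_mul_of_nonneg_left hone (hmassnn π (fun i => (hπpos i).le) x)
        _ = Real.exp (-(l*ε)) * (chainMass π Pm x * Real.exp (l * f x)) := by ring
    · rw [if_neg hx]
      have := hmassnn π (fun i => (hπpos i).le) x
      positivity
  have hPpiA : chainProb π Pm Aset ≤ Real.exp (-(2 * t0^2 / ((n:ℝ) * cb^2))) := by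
    refine hmkv.trans ?_
    calc Real.exp (-(l*ε)) * chainExp π Pm (fun x => Real.exp (l * f x))
        ≤ Real.exp (-(l*ε)) * Real.exp (l * E + n * (l^2*cb^2/8)) :=
          mul_le_mul_of_nonneg_left (hmgf l) (Real.exp_pos _).le
      _ = Real.exp (-(l*ε) + (l * E + n*(l^2*cb^2/8))) := (Real.exp_add _ _).symm
      _ = Real.exp (-(2*t0^2/((n:ℝ)*cb^2))) := by
          congr 1
          rw [hl, ht0]
          have hcbne : cb ≠ 0 := ne_of_gt hcb0
          have hnne : (n:ℝ) ≠ 0 := ne_of_gt hn0R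
          field_simp
          ring
  -- marginal identity
  have hmarg : ∀ (ρ' : Fin K → ℝ) (ψ : Fin K → ℝ),
      (∑ x : Fin n → Fin K, chainMass ρ' Pm x * ψ (x ⟨0, hn⟩)) = ∑ i, ρ' i * ψ i := by
    intro ρ' ψ
    have h := chainExp_eq_init hn i0 ρ' Pm (fun z => ψ (z ⟨0, hn⟩))
    rw [h]
    apply Finset.sum_congr rfl
    intro i _
    congr 1
    rw [Gev0 hn Pm hProw ψ (n-1) (by omega)]
    simp
  -- change of measure and Cauchy-Schwarz
  have hmassfac : ∀ x : Fin n → Fin K, chainMass ϱ Pm x =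
      (ϱ (x ⟨0, hn⟩) / π (x ⟨0, hn⟩)) * chainMass π Pm x := by
    intro x
    unfold chainMass
    rw [dif_pos hn, dif_pos hn]
    have hne := (hπpos (x ⟨0, hn⟩)).ne'
    field_simp
  have hPrhoA_nn : 0 ≤ chainProb ϱ Pm Aset := by
    apply Finset.sum_nonneg
    intro x _
    by_cases hx : x ∈ Aset
    · rw [if_pos hx]; exact hmassnn ϱ hϱnn x
    · rw [if_neg hx]
  have hNsqnn : 0 ≤ ∑ i, ϱ i^2 / π i :=
    Finset.sum_nonneg fun i _ => div_nonneg (sq_nonneg _) (hπpos i).le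
  have hCS : chainProb ϱ Pm Aset ≤ nsIndex ϱ π * Real.sqrt (chainProb π Pm Aset) := by
    set F : (Fin n → Fin K) → ℝ :=
      fun x => Real.sqrt (chainMass π Pm x) * (ϱ (x ⟨0,hn⟩) / π (x ⟨0,hn⟩)) with hF
    set G : (Fin n → Fin K) → ℝ :=
      fun x => Real.sqrt (chainMass π Pm x) * (if x ∈ Aset then (1:ℝ) else 0) with hG
    have hself : ∀ x, Real.sqrt (chainMass π Pm x) * Real.sqrt (chainMass π Pm x) =
        chainMass π Pm x := fun x => Real.mul_self_sqrt (hmassnn π (fun i => (hπpos i).le) x)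
    have hFG : ∀ x, F x * G x = (if x ∈ Aset then chainMass ϱ Pm x else 0) := by
      intro x
      by_cases hx : x ∈ Aset
      · rw [if_pos hx]
        rw [hmassfac x]
        calc F x * G x = (Real.sqrt (chainMass π Pm x) * Real.sqrt (chainMass π Pm x)) *
              (ϱ (x ⟨0,hn⟩) / π (x ⟨0,hn⟩)) := by
                rw [hF, hG]
                simp only [if_pos hx]
                ring
          _ = ϱ (x ⟨0,hn⟩) / π (x ⟨0,hn⟩) * chainMass π Pm x := by rw [hself x]; ring
      · rw [if_neg hx]
        rw [hF, hG]
        simp only [if_neg hx]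
        ring
    have hF2 : ∑ x : Fin n → Fin K, F x^2 = ∑ i, ϱ i^2 / π i := by
      have h1 : ∀ x : Fin n → Fin K, F x^2 =
          chainMass π Pm x * ((fun v => (ϱ v / π v)^2) (x ⟨0,hn⟩)) := by
        intro x
        rw [hF]
        simp only
        rw [mul_pow, Real.sq_sqrt (hmassnn π (fun i => (hπpos i).le) x)]
      calc ∑ x : Fin n → Fin K, F x^2
          = ∑ x : Fin n → Fin K, chainMass π Pm x * ((fun v => (ϱ v/π v)^2) (x ⟨0,hn⟩)) :=
            Finset.sum_congr rfl fun x _ => h1 x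
        _ = ∑ i, π i * (ϱ i/π i)^2 := hmarg π (fun v => (ϱ v/π v)^2)
        _ = ∑ i, ϱ i^2/π i := by
            apply Finset.sum_congr rfl
            intro i _
            have hne := (hπpos i).ne'
            field_simp
    have hG2 : ∑ x : Fin n → Fin K, G x^2 = chainProb π Pm Aset := by
      unfold chainProb
      apply Finset.sum_congr rfl
      intro x _
      by_cases hx : x ∈ Aset
      · rw [hG]
        simp only [if_pos hx]
        rw [mul_one, Real.sq_sqrt (hmassnn π (fun i => (hπpos i).le) x)]
      · rw [hG]
        simp only [if_neg hx]
        ring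
    have hCS2 := Finset.sum_mul_sq_le_sq_mul_sq Finset.univ F G
    have hPeq : ∑ x : Fin n → Fin K, F x * G x = chainProb ϱ Pm Aset := by
      unfold chainProb
      exact Finset.sum_congr rfl fun x _ => hFG x
    rw [hPeq, hF2, hG2] at hCS2
    have h1 : chainProb ϱ Pm Aset = Real.sqrt ((chainProb ϱ Pm Aset)^2) :=
      (Real.sqrt_sq hPrhoA_nn).symm
    rw [h1]
    calc Real.sqrt ((chainProb ϱ Pm Aset)^2)
        ≤ Real.sqrt ((∑ i, ϱ i^2/π i) * chainProb π Pm Aset) := Real.sqrt_le_sqrt hCS2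
      _ = Real.sqrt (∑ i, ϱ i^2/π i) * Real.sqrt (chainProb π Pm Aset) :=
          Real.sqrt_mul hNsqnn _
      _ = nsIndex ϱ π * Real.sqrt (chainProb π Pm Aset) := rfl
  -- the nonstationarity index is at least one
  have hNsq : 1 ≤ ∑ i, ϱ i^2 / π i := by
    have hcs := Finset.sum_mul_sq_le_sq_mul_sq Finset.univ
      (fun i => ϱ i / Real.sqrt (π i)) (fun i => Real.sqrt (π i))
    have h1 : ∑ i, (ϱ i / Real.sqrt (π i)) * Real.sqrt (π i) = 1 := by
      rw [← hϱsum]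
      apply Finset.sum_congr rfl
      intro i _
      rw [div_mul_cancel₀]
      exact (Real.sqrt_pos.2 (hπpos i)).ne'
    have h2 : ∑ i, (ϱ i / Real.sqrt (π i))^2 = ∑ i, ϱ i^2 / π i := by
      apply Finset.sum_congr rfl
      intro i _
      rw [div_pow, Real.sq_sqrt (hπpos i).le]
    have h3 : ∑ i, (Real.sqrt (π i))^2 = 1 := by
      rw [← hπsum]
      apply Finset.sum_congr rfl
      intro i _
      exact Real.sq_sqrt (hπpos i).le
    rw [h1, h2, h3, mul_one] at hcs
    calc (1:ℝ) = 1^2 := (one_pow 2).symm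
      _ ≤ ∑ i, ϱ i^2/π i := hcs
  have hN1 : 1 ≤ nsIndex ϱ π := by
    unfold nsIndex
    rw [show (1:ℝ) = Real.sqrt 1 from Real.sqrt_one.symm]
    exact Real.sqrt_le_sqrt hNsq
  have hNpos : 0 < nsIndex ϱ π := lt_of_lt_of_le one_pos hN1
  set θ : ℝ := t0^2 / ((n:ℝ) * cb^2) with hθdef
  have hsqrtexp : Real.sqrt (Real.exp (-(2*t0^2/((n:ℝ)*cb^2)))) = Real.exp (-θ) := by
    rw [show -(2*t0^2/((n:ℝ)*cb^2)) = (-θ) + (-θ) by rw [hθdef]; ring]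
    rw [Real.exp_add, Real.sqrt_mul_self (Real.exp_pos _).le]
  have h2p : ((2:ℝ) ^ (1/p))^2 = (2:ℝ) ^ (2/p) := by
    rw [← Real.rpow_natCast ((2:ℝ)^(1/p)) 2, ← Real.rpow_mul (by norm_num : (0:ℝ) ≤ 2)]
    congr 1
    push_cast
    ring
  have h2ppos : (0:ℝ) < (2:ℝ)^(2/p) := Real.rpow_pos_of_pos (by norm_num) _
  have hθval : θ = t0^2 * n * (1-r)^2 / (2:ℝ)^(2/p) := by
    rw [hθdef, hcb, hc, ← h2p]
    have h2pne : ((2:ℝ)^(1/p)) ≠ 0 := ne_of_gt (Real.rpow_pos_of_pos (by norm_num) _)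
    field_simp
  have hlogθ : Real.log (nsIndex ϱ π / δ) ≤ θ := by
    have hden : (0:ℝ) < t0^2 * (1-r)^2 := by positivity
    have h := (div_le_iff₀ hden).1 (ge_iff_le.1 hsample)
    rw [hθval, le_div_iff₀ h2ppos]
    nlinarith [h]
  have hfinal : nsIndex ϱ π * Real.exp (-θ) ≤ δ := by
    have hδpos := hδ.1
    have hlogle : -θ ≤ Real.log (δ / nsIndex ϱ π) := by
      rw [Real.log_div (ne_of_gt hδpos) (ne_of_gt hNpos)]
      have h2 : Real.log (nsIndex ϱ π / δ) =
          Real.log (nsIndex ϱ π) - Real.log δ :=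
        Real.log_div (ne_of_gt hNpos) (ne_of_gt hδpos)
      rw [h2] at hlogθ
      linarith
    calc nsIndex ϱ π * Real.exp (-θ)
        ≤ nsIndex ϱ π * Real.exp (Real.log (δ / nsIndex ϱ π)) :=
          mul_le_mul_of_nonneg_left (Real.exp_le_exp.2 hlogle) hNpos.le
      _ = nsIndex ϱ π * (δ / nsIndex ϱ π) := by
          rw [Real.exp_log (div_pos hδpos hNpos)]
      _ = δ := by field_simp
  calc chainProb ϱ Pm Aset ≤ nsIndex ϱ π * Real.sqrt (chainProb π Pm Aset) := hCS
    _ ≤ nsIndex ϱ π * Real.sqrt (Real.exp (-(2*t0^2/((n:ℝ)*cb^2)))) :=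
        mul_le_mul_of_nonneg_left (Real.sqrt_le_sqrt hPpiA) hNpos.le
    _ = nsIndex ϱ π * Real.exp (-θ) := by rw [hsqrtexp]
    _ ≤ δ := hfinal
end

section
/- Let X_{0:n−1} be drawn from an ergodic time-homogeneous Markov chain on the finite state space E = {1, …, K} with transition matrix P whose Dobrushin coefficient satisfies r < 1, started from an arbitrary initial distribution ϱ, and let π denote the stationary distribution. Let π̂_i(X_{0:n−1}) = (1/n)Σ_{k=0}^{n−1} 1(X_k = i) and fix p ≥ 1. Then for every ε > 0: P_ϱ(‖π̂(X_{0:n−1}) − π‖_p ≥ ε) ≤ √(2K) · ‖ϱ/π‖_{2,π} · exp(−K^{−2/p} n ε² (1−r)²). -/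
open Finset
open scoped ENNReal Classical BigOperators

-- Analytic core: for p ∈ [0,1], log(1-p+p e^s) ≤ p s + s²/8
lemma key_analytic (p : ℝ) (hp0 : 0 ≤ p) (hp1 : p ≤ 1) (s : ℝ) :
    (1 - p) + p * Real.exp s ≤ Real.exp (p * s + s ^ 2 / 8) := by
  -- d t = 1 - p + p e^t > 0
  set d : ℝ → ℝ := fun t => 1 - p + p * Real.exp t with hd
  have hdpos : ∀ t, 0 < d t := by
    intro t
    rcases eq_or_lt_of_le hp0 with h | h
    · simp [hd, ← h]
    · have h2 : 0 < p * Real.exp t := mul_pos h (Real.exp_pos t)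
      simp only [hd]; linarith
  -- y t = p e^t / d t ∈ [0,1]
  set y : ℝ → ℝ := fun t => p * Real.exp t / d t with hy
  have hy0 : ∀ t, 0 ≤ y t := fun t => div_nonneg (by positivity) (hdpos t).le
  have hy1 : ∀ t, y t ≤ 1 := by
    intro t
    rw [hy, div_le_one (hdpos t)]
    simp only [hd]; linarith
  -- g t = p t + t²/8 - log (d t)
  set g : ℝ → ℝ := fun t => p * t + t ^ 2 / 8 - Real.log (d t) with hg
  have hdd : ∀ t, HasDerivAt d (p * Real.exp t) t := by
    intro t
    exact ((Real.hasDerivAt_exp t).const_mul p).const_add (1 - p)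
  have hgd : ∀ t, HasDerivAt g (p + t / 4 - y t) t := by
    intro t
    have h1 : HasDerivAt (fun t : ℝ => Real.log (d t)) (p * Real.exp t / d t) t :=
      (hdd t).log (hdpos t).ne'
    have h2 : HasDerivAt (fun t : ℝ => p * t + t ^ 2 / 8) (p + t / 4) t := by
      have := ((hasDerivAt_pow 2 t).div_const 8).const_add 0
      have h3 : HasDerivAt (fun t : ℝ => p * t) p t := by
        simpa using (hasDerivAt_id t).const_mul p
      have h4 : HasDerivAt (fun t : ℝ => t ^ 2 / 8) (t / 4) t := by
        have := (hasDerivAt_pow 2 t).div_const 8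
        exact this.congr_deriv (by rw [show (2:ℕ) - 1 = 1 from rfl]; ring)
      exact h3.add h4
    exact h2.sub h1
  -- g' t = p + t/4 - y t, monotone since (g')' = 1/4 - y(1-y) ≥ 0
  set g' : ℝ → ℝ := fun t => p + t / 4 - y t with hg'
  have hyd : ∀ t, HasDerivAt y (y t * (1 - y t)) t := by
    intro t
    have h1 : HasDerivAt (fun t : ℝ => p * Real.exp t) (p * Real.exp t) t :=
      (Real.hasDerivAt_exp t).const_mul p
    have h2 := h1.div (hdd t) (hdpos t).ne'
    refine h2.congr_deriv ?_
    have hne : d t ≠ 0 := (hdpos t).ne'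
    simp only [hy]
    field_simp
  have hg'd : ∀ t, HasDerivAt g' (1 / 4 - y t * (1 - y t)) t := by
    intro t
    have h1 : HasDerivAt (fun t : ℝ => p + t / 4) (1 / 4) t := by
      simpa using ((hasDerivAt_id t).div_const 4).const_add p
    exact h1.sub (hyd t)
  have hg'mono : Monotone g' := by
    have : ∀ t, 0 ≤ 1 / 4 - y t * (1 - y t) := by
      intro t; nlinarith [sq_nonneg (2 * y t - 1)]
    exact monotone_of_deriv_nonneg (fun t => (hg'd t).differentiableAt)
      (fun t => by rw [(hg'd t).deriv]; exact this t)
  have hy0' : y 0 = p := by simp [hy, hd]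
  have hg'0 : g' 0 = 0 := by simp [hg', hy0']
  -- g 0 = 0
  have hg0 : g 0 = 0 := by simp [hg, hd]
  -- g is nonneg: monotone on [0,∞), antitone on (-∞,0]
  have hgnn : 0 ≤ g s := by
    rcases le_or_gt 0 s with h | h
    · have : MonotoneOn g (Set.Ici 0) := by
        apply monotoneOn_of_deriv_nonneg (convex_Ici 0)
          (Continuous.continuousOn (by
            exact ((hgd ·) |> fun hh => continuous_iff_continuousAt.2
              fun t => (hh t).continuousAt)))
          (fun t ht => ((hgd t).differentiableAt).differentiableWithinAt)
        intro t ht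
        rw [(hgd t).deriv]
        have : (0:ℝ) ≤ g' t := by
          rw [← hg'0]; exact hg'mono (by simpa using le_of_lt (by simpa [Set.mem_Ioi] using ht))
        simpa [hg'] using this
      have := this (Set.self_mem_Ici) (Set.mem_Ici.2 h) h
      simpa [hg0] using this
    · have : AntitoneOn g (Set.Iic 0) := by
        apply antitoneOn_of_deriv_nonpos (convex_Iic 0)
          (Continuous.continuousOn (continuous_iff_continuousAt.2
            fun t => (hgd t).continuousAt))
          (fun t ht => ((hgd t).differentiableAt).differentiableWithinAt)
        intro t ht
        rw [(hgd t).deriv]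
        have : g' t ≤ 0 := by
          rw [← hg'0]; exact hg'mono (le_of_lt (by simpa [Set.mem_Iio] using ht))
        simpa [hg'] using this
      have := this (Set.mem_Iic.2 h.le) (Set.self_mem_Iic) h.le
      simpa [hg0] using this
  -- conclude
  have : Real.log (d s) ≤ p * s + s ^ 2 / 8 := by
    have := hgnn; simp only [hg] at this; linarith
  calc d s = Real.exp (Real.log (d s)) := (Real.exp_log (hdpos s)).symm
    _ ≤ Real.exp (p * s + s ^ 2 / 8) := Real.exp_le_exp.2 this


/-- Hoeffding's lemma, finite weighted-sum version. -/
lemma hoeffding_sum {ι : Type*} [Fintype ι] (w v : ι → ℝ)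
    (hw : ∀ i, 0 ≤ w i) (hw1 : ∑ i, w i = 1) (hmean : ∑ i, w i * v i = 0)
    (a b : ℝ) (hv : ∀ i, v i ∈ Set.Icc a b) (L : ℝ) :
    ∑ i, w i * Real.exp (L * v i) ≤ Real.exp (L ^ 2 * (b - a) ^ 2 / 8) := by
  have hne : Nonempty ι := by
    by_contra h
    rw [not_nonempty_iff] at h
    simp [Finset.univ_eq_empty] at hw1
  obtain ⟨i0⟩ := hne
  have hab : a ≤ b := le_trans (hv i0).1 (hv i0).2
  -- a ≤ 0 ≤ b
  have ha0 : a ≤ 0 := by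
    by_contra h
    push_neg at h
    have : ∑ i, w i * v i ≥ ∑ i, w i * a := by
      apply Finset.sum_le_sum
      intro i _
      exact mul_le_mul_of_nonneg_left (hv i).1 (hw i)
    rw [← Finset.sum_mul, hw1, one_mul] at this
    linarith [hmean ▸ this]
  have hb0 : 0 ≤ b := by
    by_contra h
    push_neg at h
    have : ∑ i, w i * v i ≤ ∑ i, w i * b := by
      apply Finset.sum_le_sum
      intro i _
      exact mul_le_mul_of_nonneg_left (hv i).2 (hw i)
    rw [← Finset.sum_mul, hw1, one_mul] at this
    linarith [hmean ▸ this]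
  rcases eq_or_lt_of_le hab with heq | hlt
  · -- a = b forces a = b = 0, all v i = 0
    have ha : a = 0 := le_antisymm ha0 (heq ▸ hb0)
    have hvz : ∀ i, v i = 0 := fun i =>
      le_antisymm (ha ▸ heq ▸ (hv i).2) (ha ▸ (hv i).1)
    simp only [hvz, mul_zero, Real.exp_zero, mul_one, hw1]
    exact Real.one_le_exp (by positivity)
  · -- convexity step
    have hba : 0 < b - a := by linarith
    have conv : ∀ i, Real.exp (L * v i) ≤
        ((b - v i) / (b - a)) * Real.exp (L * a) + ((v i - a) / (b - a)) * Real.exp (L * b) := by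
      intro i
      have h1 : 0 ≤ (b - v i) / (b - a) := div_nonneg (by linarith [(hv i).2]) hba.le
      have h2 : 0 ≤ (v i - a) / (b - a) := div_nonneg (by linarith [(hv i).1]) hba.le
      have h3 : (b - v i) / (b - a) + (v i - a) / (b - a) = 1 := by
        field_simp
        ring
      have := convexOn_exp.2 (Set.mem_univ (L * a)) (Set.mem_univ (L * b)) h1 h2 h3
      have harg : (b - v i) / (b - a) * (L * a) + (v i - a) / (b - a) * (L * b) = L * v i := by
        field_simp
        ring
      simp only [smul_eq_mul] at this
      rw [harg] at this
      exact this
    have step1 : ∑ i, w i * Real.exp (L * v i) ≤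
        (b / (b - a)) * Real.exp (L * a) + (-a / (b - a)) * Real.exp (L * b) := by
      calc ∑ i, w i * Real.exp (L * v i)
          ≤ ∑ i, w i * (((b - v i) / (b - a)) * Real.exp (L * a)
              + ((v i - a) / (b - a)) * Real.exp (L * b)) := by
            apply Finset.sum_le_sum
            intro i _
            exact mul_le_mul_of_nonneg_left (conv i) (hw i)
        _ = (b / (b - a)) * Real.exp (L * a) + (-a / (b - a)) * Real.exp (L * b) := by
            have expand : ∀ i, w i * (((b - v i) / (b - a)) * Real.exp (L * a)
                + ((v i - a) / (b - a)) * Real.exp (L * b))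
              = (w i * b - w i * v i) / (b - a) * Real.exp (L * a)
                + (w i * v i - w i * a) / (b - a) * Real.exp (L * b) := by
              intro i; field_simp
            rw [Finset.sum_congr rfl (fun i _ => expand i)]
            rw [Finset.sum_add_distrib]
            simp only [div_mul_eq_mul_div, ← Finset.sum_div]
            have A : ∑ i, (w i * b - w i * v i) * Real.exp (L * a)
                = b * Real.exp (L * a) := by
              simp only [sub_mul]
              rw [Finset.sum_sub_distrib]
              have A1 : ∑ i, w i * b * Real.exp (L * a)
                  = (∑ i, w i) * (b * Real.exp (L * a)) := by
                rw [Finset.sum_mul]; simp [mul_assoc]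
              have A2 : ∑ i, w i * v i * Real.exp (L * a)
                  = (∑ i, w i * v i) * Real.exp (L * a) := (Finset.sum_mul ..).symm
              rw [A1, A2, hw1, hmean]; ring
            have B : ∑ i, (w i * v i - w i * a) * Real.exp (L * b)
                = -a * Real.exp (L * b) := by
              simp only [sub_mul]
              rw [Finset.sum_sub_distrib]
              rw [← Finset.sum_mul, ← Finset.sum_mul, hmean]
              rw [show ∑ i, w i * a = (∑ i, w i) * a from (Finset.sum_mul ..).symm, hw1]
              ring
            rw [A, B]
    -- now apply key_analytic with p = -a/(b-a), s = L*(b-a)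
    set q : ℝ := -a / (b - a) with hq
    have hq0 : 0 ≤ q := div_nonneg (by linarith) hba.le
    have hq1 : q ≤ 1 := by
      rw [hq, div_le_one hba]
      linarith
    have key := key_analytic q hq0 hq1 (L * (b - a))
    have e1 : L * a = -(q * (L * (b - a))) := by
      rw [hq]; field_simp
    have e2 : L * b = L * a + L * (b - a) := by ring
    have rewr : (b / (b - a)) * Real.exp (L * a) + (-a / (b - a)) * Real.exp (L * b)
        = Real.exp (L * a) * ((1 - q) + q * Real.exp (L * (b - a))) := by
      have hbq : b / (b - a) = 1 - q := by rw [hq]; field_simp; ring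
      rw [hbq, ← hq, e2, Real.exp_add]
      ring
    have final : Real.exp (L * a) * ((1 - q) + q * Real.exp (L * (b - a)))
        ≤ Real.exp (L ^ 2 * (b - a) ^ 2 / 8) := by
      have hexp : 0 < Real.exp (L * a) := Real.exp_pos _
      calc Real.exp (L * a) * ((1 - q) + q * Real.exp (L * (b - a)))
          ≤ Real.exp (L * a) * Real.exp (q * (L * (b - a)) + (L * (b - a)) ^ 2 / 8) :=
            mul_le_mul_of_nonneg_left key hexp.le
        _ = Real.exp (L * a + q * (L * (b - a)) + (L * (b - a)) ^ 2 / 8) := by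
            rw [← Real.exp_add]; ring_nf
        _ = Real.exp (L ^ 2 * (b - a) ^ 2 / 8) := by
            congr 1
            rw [e1]; ring
    calc ∑ i, w i * Real.exp (L * v i)
        ≤ (b / (b - a)) * Real.exp (L * a) + (-a / (b - a)) * Real.exp (L * b) := step1
      _ = Real.exp (L * a) * ((1 - q) + q * Real.exp (L * (b - a))) := rewr
      _ ≤ Real.exp (L ^ 2 * (b - a) ^ 2 / 8) := final


section chain
variable {K : ℕ} (Pm : Fin K → Fin K → ℝ)

/-- Transition operator acting on functions. -/
noncomputable def Pop (f : Fin K → ℝ) : Fin K → ℝ := fun a => ∑ b, Pm a b * f b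

lemma osc_contract (hK : 0 < K) (hPnn : ∀ i j, 0 ≤ Pm i j) (hProw : ∀ i, ∑ j, Pm i j = 1)
    (r : ℝ) (hr2 : ∀ i j, (1 / 2) * ∑ l, |Pm i l - Pm j l| ≤ r)
    (f : Fin K → ℝ) (c : ℝ) (hc : ∀ a b, |f a - f b| ≤ c) :
    ∀ a b, |Pop Pm f a - Pop Pm f b| ≤ r * c := by
  intro a b
  have hne : (univ : Finset (Fin K)).Nonempty := ⟨⟨0, hK⟩, mem_univ _⟩
  obtain ⟨mx, -, hmx⟩ := Finset.exists_max_image univ f hne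
  obtain ⟨mn, -, hmn⟩ := Finset.exists_min_image univ f hne
  set t : ℝ := (f mx + f mn) / 2 with ht
  have hft : ∀ l, |f l - t| ≤ c / 2 := by
    intro l
    have h1 := hmx l (mem_univ l)
    have h2 := hmn l (mem_univ l)
    have h3 := hc mx mn
    rw [abs_le] at h3 ⊢
    constructor <;> [skip; skip] <;> cases' h3 with h3a h3b <;> simp only [ht] <;> linarith
  have key : Pop Pm f a - Pop Pm f b = ∑ l, (Pm a l - Pm b l) * (f l - t) := by
    simp only [Pop, mul_sub, sub_mul, Finset.sum_sub_distrib]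
    rw [← Finset.sum_mul, ← Finset.sum_mul, hProw a, hProw b]
    ring
  rw [key]
  calc |∑ l, (Pm a l - Pm b l) * (f l - t)|
      ≤ ∑ l, |(Pm a l - Pm b l) * (f l - t)| := Finset.abs_sum_le_sum_abs _ _
    _ ≤ ∑ l, |Pm a l - Pm b l| * (c / 2) := by
        apply Finset.sum_le_sum
        intro l _
        rw [abs_mul]
        exact mul_le_mul_of_nonneg_left (hft l) (abs_nonneg _)
    _ = ((1 / 2) * ∑ l, |Pm a l - Pm b l|) * c := by rw [← Finset.sum_mul]; ring
    _ ≤ r * c := by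
        have hc0 : 0 ≤ c := le_trans (abs_nonneg _) (hc a a)
        exact mul_le_mul_of_nonneg_right (hr2 a b) hc0

variable (g : Fin K → ℝ)

/-- `Hfun m a = E[∑_{j=0}^m g(X_j) | X_0 = a]`. -/
noncomputable def Hfun : ℕ → Fin K → ℝ
  | 0 => g
  | (m + 1) => fun a => g a + Pop Pm (Hfun m) a

/-- `Qfun L m a = E[exp (L ∑_{j=0}^m g(X_j)) | X_0 = a]`. -/
noncomputable def Qfun (L : ℝ) : ℕ → Fin K → ℝ
  | 0 => fun a => Real.exp (L * g a)
  | (m + 1) => fun a => Real.exp (L * g a) * ∑ b, Pm a b * Qfun L m b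

lemma osc_Hfun (hK : 0 < K) (hPnn : ∀ i j, 0 ≤ Pm i j) (hProw : ∀ i, ∑ j, Pm i j = 1)
    (r : ℝ) (hr0 : 0 ≤ r) (hr : r < 1) (hr2 : ∀ i j, (1 / 2) * ∑ l, |Pm i l - Pm j l| ≤ r)
    (hg : ∀ a, g a ∈ Set.Icc (0:ℝ) 1) :
    ∀ m a b, |Hfun Pm g m a - Hfun Pm g m b| ≤ 1 / (1 - r) := by
  have hr1 : 0 < 1 - r := by linarith
  have hoscg : ∀ a b, |g a - g b| ≤ 1 := by
    intro a b
    rw [abs_le]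
    constructor <;> linarith [(hg a).1, (hg a).2, (hg b).1, (hg b).2]
  intro m
  induction m with
  | zero =>
      intro a b
      calc |Hfun Pm g 0 a - Hfun Pm g 0 b| ≤ 1 := hoscg a b
        _ ≤ 1 / (1 - r) := by rw [le_div_iff₀ hr1]; linarith
  | succ m ih =>
      intro a b
      have hP := osc_contract Pm hK hPnn hProw r hr2 (Hfun Pm g m) (1 / (1 - r)) ih a b
      have : Hfun Pm g (m+1) a - Hfun Pm g (m+1) b
          = (g a - g b) + (Pop Pm (Hfun Pm g m) a - Pop Pm (Hfun Pm g m) b) := by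
        simp [Hfun]; ring
      rw [this]
      calc |(g a - g b) + (Pop Pm (Hfun Pm g m) a - Pop Pm (Hfun Pm g m) b)|
          ≤ |g a - g b| + |Pop Pm (Hfun Pm g m) a - Pop Pm (Hfun Pm g m) b| := abs_add_le _ _
        _ ≤ 1 + r * (1 / (1 - r)) := add_le_add (hoscg a b) hP
        _ = 1 / (1 - r) := by field_simp; ring

lemma Qfun_le (hK : 0 < K) (hPnn : ∀ i j, 0 ≤ Pm i j) (hProw : ∀ i, ∑ j, Pm i j = 1)
    (r : ℝ) (hr0 : 0 ≤ r) (hr : r < 1) (hr2 : ∀ i j, (1 / 2) * ∑ l, |Pm i l - Pm j l| ≤ r)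
    (hg : ∀ a, g a ∈ Set.Icc (0:ℝ) 1) (L : ℝ) :
    ∀ m a, Qfun Pm g L m a ≤
      Real.exp (L * Hfun Pm g m a + m * (L ^ 2 * (1 / (1 - r)) ^ 2 / 8)) := by
  have hr1 : 0 < 1 - r := by linarith
  set c : ℝ := 1 / (1 - r) with hcdef
  have hosc := osc_Hfun Pm g hK hPnn hProw r hr0 hr hr2 hg
  intro m
  induction m with
  | zero => intro a; simp [Qfun, Hfun]
  | succ m ih =>
      intro a
      have hne : (univ : Finset (Fin K)).Nonempty := ⟨⟨0, hK⟩, mem_univ _⟩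
      obtain ⟨mx, -, hmx⟩ := Finset.exists_max_image univ (Hfun Pm g m) hne
      obtain ⟨mn, -, hmn⟩ := Finset.exists_min_image univ (Hfun Pm g m) hne
      -- Hoeffding step at state a
      have hH : ∑ b, Pm a b * Real.exp (L * (Hfun Pm g m b - Pop Pm (Hfun Pm g m) a))
          ≤ Real.exp (L ^ 2 * c ^ 2 / 8) := by
        have hmean : ∑ b, Pm a b * (Hfun Pm g m b - Pop Pm (Hfun Pm g m) a) = 0 := by
          simp only [mul_sub, Finset.sum_sub_distrib, ← Finset.sum_mul, hProw a]
          simp [Pop]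
        have happ := hoeffding_sum (Pm a) (fun b => Hfun Pm g m b - Pop Pm (Hfun Pm g m) a)
          (hPnn a) (hProw a) hmean
          (Hfun Pm g m mn - Pop Pm (Hfun Pm g m) a)
          (Hfun Pm g m mx - Pop Pm (Hfun Pm g m) a)
          (fun b => ⟨sub_le_sub_right (hmn b (mem_univ b)) _,
            sub_le_sub_right (hmx b (mem_univ b)) _⟩) L
        refine le_trans happ (Real.exp_le_exp.2 ?_)
        have h1 : Hfun Pm g m mx - Pop Pm (Hfun Pm g m) a
            - (Hfun Pm g m mn - Pop Pm (Hfun Pm g m) a) = Hfun Pm g m mx - Hfun Pm g m mn := by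
          ring
        have h2 : 0 ≤ Hfun Pm g m mx - Hfun Pm g m mn := by
          linarith [hmn mx (mem_univ mx)]
        have h3 : Hfun Pm g m mx - Hfun Pm g m mn ≤ c := by
          have := hosc m mx mn
          rw [abs_le] at this
          linarith [this.2]
        have hc0 : (0:ℝ) ≤ c := by positivity
        have : (Hfun Pm g m mx - Hfun Pm g m mn) ^ 2 ≤ c ^ 2 := by nlinarith
        rw [h1]
        have hL2 : (0:ℝ) ≤ L ^ 2 := sq_nonneg L
        nlinarith
      -- assemble
      have main : ∑ b, Pm a b * Qfun Pm g L m b ≤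
          Real.exp (L * Pop Pm (Hfun Pm g m) a + m * (L ^ 2 * c ^ 2 / 8) + L ^ 2 * c ^ 2 / 8) := by
        calc ∑ b, Pm a b * Qfun Pm g L m b
            ≤ ∑ b, Pm a b * Real.exp (L * Hfun Pm g m b + m * (L ^ 2 * c ^ 2 / 8)) := by
              apply Finset.sum_le_sum
              intro b _
              exact mul_le_mul_of_nonneg_left (ih b) (hPnn a b)
          _ = Real.exp (L * Pop Pm (Hfun Pm g m) a + m * (L ^ 2 * c ^ 2 / 8)) *
              ∑ b, Pm a b * Real.exp (L * (Hfun Pm g m b - Pop Pm (Hfun Pm g m) a)) := by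
              rw [Finset.mul_sum]
              apply Finset.sum_congr rfl
              intro b _
              rw [mul_left_comm, ← Real.exp_add]
              congr 2
              ring
          _ ≤ Real.exp (L * Pop Pm (Hfun Pm g m) a + m * (L ^ 2 * c ^ 2 / 8)) *
              Real.exp (L ^ 2 * c ^ 2 / 8) := by
              exact mul_le_mul_of_nonneg_left hH (Real.exp_pos _).le
          _ = Real.exp (L * Pop Pm (Hfun Pm g m) a + m * (L ^ 2 * c ^ 2 / 8)
                + L ^ 2 * c ^ 2 / 8) := by rw [← Real.exp_add]
      calc Qfun Pm g L (m+1) a = Real.exp (L * g a) * ∑ b, Pm a b * Qfun Pm g L m b := rfl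
        _ ≤ Real.exp (L * g a) * Real.exp (L * Pop Pm (Hfun Pm g m) a
              + m * (L ^ 2 * c ^ 2 / 8) + L ^ 2 * c ^ 2 / 8) :=
            mul_le_mul_of_nonneg_left main (Real.exp_pos _).le
        _ = Real.exp (L * Hfun Pm g (m+1) a + (m+1 : ℕ) * (L ^ 2 * c ^ 2 / 8)) := by
            rw [← Real.exp_add]
            congr 1
            simp only [Hfun]
            push_cast
            ring

end chain


section traj
variable {K : ℕ} (Pm : Fin K → Fin K → ℝ)

lemma chainMass_cons {n : ℕ} (μ : Fin K → ℝ) (a : Fin K) (y : Fin (n + 1) → Fin K) :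
    chainMass μ Pm (Fin.cons a y : Fin (n + 2) → Fin K)
      = μ a * chainMass (fun b => Pm a b) Pm y := by
  unfold chainMass
  rw [dif_pos (by omega : 0 < n + 2), dif_pos (by omega : 0 < n + 1)]
  have hL : (∏ k : Fin (n + 2 - 1),
        Pm ((Fin.cons a y : Fin (n+2) → Fin K) ⟨k.1, by have := k.2; omega⟩)
          ((Fin.cons a y : Fin (n+2) → Fin K) ⟨k.1 + 1, by have := k.2; omega⟩))
      = ∏ k : Fin (n + 1), Pm ((Fin.cons a y : Fin (n+2) → Fin K) ⟨k.1, by have := k.2; omega⟩)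
          ((Fin.cons a y : Fin (n+2) → Fin K) ⟨k.1 + 1, by have := k.2; omega⟩) :=
    Fintype.prod_equiv (finCongr (by omega)) _ _ (fun k => rfl)
  have hR : (∏ k : Fin (n + 1 - 1),
        Pm (y ⟨k.1, by have := k.2; omega⟩) (y ⟨k.1 + 1, by have := k.2; omega⟩))
      = ∏ k : Fin n, Pm (y ⟨k.1, by have := k.2; omega⟩) (y ⟨k.1 + 1, by have := k.2; omega⟩) :=
    Fintype.prod_equiv (finCongr (by omega)) _ _ (fun k => rfl)
  rw [hL, hR]
  rw [Fin.prod_univ_succ]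
  have h0 : (Fin.cons a y : Fin (n+2) → Fin K) ⟨0, by omega⟩ = a := rfl
  have h1 : ∀ (k : ℕ) (h : k + 1 < n + 2),
      (Fin.cons a y : Fin (n+2) → Fin K) ⟨k + 1, h⟩ = y ⟨k, by omega⟩ :=
    fun k h => @Fin.cons_succ (n+1) (fun _ => Fin K) a y ⟨k, by omega⟩

  simp only [Fin.val_zero, Fin.val_succ]
  rw [h0]
  rw [h1 0 (by omega)]
  have h2 : ∀ k : Fin n,
      Pm ((Fin.cons a y : Fin (n+2) → Fin K) ⟨k.1 + 1, by have := k.2; omega⟩)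
        ((Fin.cons a y : Fin (n+2) → Fin K) ⟨k.1 + 1 + 1, by have := k.2; omega⟩)
      = Pm (y ⟨k.1, by have := k.2; omega⟩) (y ⟨k.1 + 1, by have := k.2; omega⟩) := by
    intro k
    rw [h1 k.1 (by have := k.2; omega), h1 (k.1 + 1) (by have := k.2; omega)]
  rw [Finset.prod_congr rfl (fun k _ => h2 k)]

lemma sum_traj_cons {n : ℕ} (F : (Fin (n + 1) → Fin K) → ℝ) :
    ∑ x : Fin (n + 1) → Fin K, F x = ∑ a : Fin K, ∑ y : Fin n → Fin K, F (Fin.cons a y) := by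
  have e := Fin.consEquiv (fun _ : Fin (n + 1) => Fin K)
  calc ∑ x : Fin (n + 1) → Fin K, F x
      = ∑ p : Fin K × (Fin n → Fin K),
          F ((Fin.consEquiv (fun _ : Fin (n + 1) => Fin K)) p) :=
        ((Fin.consEquiv (fun _ : Fin (n + 1) => Fin K)).sum_comp F).symm
    _ = ∑ a : Fin K, ∑ y : Fin n → Fin K, F (Fin.cons a y) := by
        rw [Fintype.sum_prod_type]
        exact Finset.sum_congr rfl (fun a _ => Finset.sum_congr rfl (fun y _ => rfl))

lemma traj_sum (hProw : ∀ i, ∑ j, Pm i j = 1) (g : Fin K → ℝ) (L : ℝ) :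
    ∀ (m : ℕ) (μ : Fin K → ℝ),
      ∑ x : Fin (m + 1) → Fin K, chainMass μ Pm x * Real.exp (L * ∑ k, g (x k))
        = ∑ a, μ a * Qfun Pm g L m a := by
  intro m
  induction m with
  | zero =>
      intro μ
      have e1 : ∀ x : Fin 1 → Fin K, chainMass μ Pm x * Real.exp (L * ∑ k, g (x k))
          = μ (x 0) * Real.exp (L * g (x 0)) := by
        intro x
        simp [chainMass]
      rw [Finset.sum_congr rfl (fun x _ => e1 x)]
      have e2 : ∑ x : Fin 1 → Fin K, μ (x 0) * Real.exp (L * g (x 0))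
          = ∑ a : Fin K, μ a * Real.exp (L * g a) :=
        Fintype.sum_equiv (Equiv.funUnique (Fin 1) (Fin K)) _ _ (fun x => rfl)
      rw [e2]
      apply Finset.sum_congr rfl
      intro a _
      simp [Qfun]
  | succ m ih =>
      intro μ
      rw [sum_traj_cons]
      have step : ∀ a : Fin K,
          ∑ y : Fin (m + 1) → Fin K, chainMass μ Pm (Fin.cons a y) *
              Real.exp (L * ∑ k, g ((Fin.cons a y : Fin (m+2) → Fin K) k))
          = μ a * Qfun Pm g L (m + 1) a := by
        intro a
        have hsum : ∀ y : Fin (m + 1) → Fin K,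
            (∑ k, g ((Fin.cons a y : Fin (m+2) → Fin K) k)) = g a + ∑ k, g (y k) := by
          intro y
          rw [Fin.sum_univ_succ]
          simp [Fin.cons_succ]
        calc ∑ y : Fin (m + 1) → Fin K, chainMass μ Pm (Fin.cons a y) *
                Real.exp (L * ∑ k, g ((Fin.cons a y : Fin (m+2) → Fin K) k))
            = ∑ y : Fin (m + 1) → Fin K, μ a * Real.exp (L * g a) *
                (chainMass (fun b => Pm a b) Pm y * Real.exp (L * ∑ k, g (y k))) := by
              apply Finset.sum_congr rfl
              intro y _
              rw [chainMass_cons, hsum, mul_add, Real.exp_add]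
              ring
          _ = μ a * Real.exp (L * g a) *
              ∑ y : Fin (m + 1) → Fin K, chainMass (fun b => Pm a b) Pm y *
                Real.exp (L * ∑ k, g (y k)) := by rw [← Finset.mul_sum]
          _ = μ a * Real.exp (L * g a) * ∑ b, Pm a b * Qfun Pm g L m b := by
              rw [ih (fun b => Pm a b)]
          _ = μ a * Qfun Pm g L (m + 1) a := by rw [show Qfun Pm g L (m+1) a
                = Real.exp (L * g a) * ∑ b, Pm a b * Qfun Pm g L m b from rfl]; ring
      exact Finset.sum_congr rfl (fun a _ => step a)

lemma mass_sum (hProw : ∀ i, ∑ j, Pm i j = 1) :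
    ∀ (m : ℕ) (μ : Fin K → ℝ), ∑ x : Fin (m + 1) → Fin K, chainMass μ Pm x = ∑ a, μ a := by
  intro m μ
  have hQ1 : ∀ m a, Qfun Pm (fun _ => (0:ℝ)) 0 m a = 1 := by
    intro m
    induction m with
    | zero => intro a; simp [Qfun]
    | succ m ih => intro a; simp [Qfun, ih, hProw a]
  have := traj_sum Pm hProw (fun _ => (0:ℝ)) 0 m μ
  simpa [hQ1] using this

end traj


section mgf
variable {K : ℕ} (Pm : Fin K → Fin K → ℝ) (π : Fin K → ℝ) (g : Fin K → ℝ)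

lemma chainMass_nonneg {n : ℕ} (μ : Fin K → ℝ) (hμ : ∀ a, 0 ≤ μ a)
    (hPnn : ∀ i j, 0 ≤ Pm i j) (x : Fin n → Fin K) : 0 ≤ chainMass μ Pm x := by
  unfold chainMass
  apply mul_nonneg
  · split <;> simp [hμ]
  · exact Finset.prod_nonneg (fun k _ => hPnn _ _)

lemma sum_pi_Pop (hπstat : ∀ j, ∑ i, π i * Pm i j = π j) (f : Fin K → ℝ) :
    ∑ a, π a * Pop Pm f a = ∑ a, π a * f a := by
  unfold Pop
  calc ∑ a, π a * ∑ b, Pm a b * f b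
      = ∑ a, ∑ b, π a * Pm a b * f b := by
        apply Finset.sum_congr rfl
        intro a _
        rw [Finset.mul_sum]
        exact Finset.sum_congr rfl (fun b _ => by ring)
    _ = ∑ b, ∑ a, π a * Pm a b * f b := Finset.sum_comm
    _ = ∑ b, (∑ a, π a * Pm a b) * f b := by
        exact Finset.sum_congr rfl (fun b _ => (Finset.sum_mul ..).symm)
    _ = ∑ a, π a * f a := by
        exact Finset.sum_congr rfl (fun b _ => by rw [hπstat b])

lemma sum_pi_H (hπstat : ∀ j, ∑ i, π i * Pm i j = π j) :
    ∀ m, ∑ a, π a * Hfun Pm g m a = (m + 1 : ℕ) * ∑ a, π a * g a := by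
  intro m
  induction m with
  | zero => simp [Hfun]
  | succ m ih =>
      have : ∑ a, π a * Hfun Pm g (m+1) a
          = (∑ a, π a * g a) + ∑ a, π a * Pop Pm (Hfun Pm g m) a := by
        rw [show Hfun Pm g (m+1) = fun a => g a + Pop Pm (Hfun Pm g m) a from rfl]
        rw [← Finset.sum_add_distrib]
        apply Finset.sum_congr rfl
        intro a _
        ring
      rw [this, sum_pi_Pop Pm π hπstat, ih]
      push_cast
      ring

/-- Stationary MGF bound. -/
lemma mgf_pi (hK : 0 < K) (hPnn : ∀ i j, 0 ≤ Pm i j) (hProw : ∀ i, ∑ j, Pm i j = 1)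
    (r : ℝ) (hr0 : 0 ≤ r) (hr : r < 1) (hr2 : ∀ i j, (1 / 2) * ∑ l, |Pm i l - Pm j l| ≤ r)
    (hπnn : ∀ i, 0 ≤ π i) (hπsum : ∑ i, π i = 1) (hπstat : ∀ j, ∑ i, π i * Pm i j = π j)
    (hg : ∀ a, g a ∈ Set.Icc (0:ℝ) 1) (L : ℝ) (m : ℕ) :
    ∑ x : Fin (m + 1) → Fin K, chainMass π Pm x * Real.exp (L * ∑ k, g (x k))
      ≤ Real.exp (L * ((m + 1 : ℕ) * ∑ a, π a * g a)
          + (m + 1 : ℕ) * (L ^ 2 * (1 / (1 - r)) ^ 2 / 8)) := by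
  set c : ℝ := 1 / (1 - r) with hc
  rw [traj_sum Pm hProw g L m π]
  set S : ℝ := (m + 1 : ℕ) * ∑ a, π a * g a with hS
  have hSH : ∑ a, π a * Hfun Pm g m a = S := sum_pi_H Pm π g hπstat m
  have hosc := osc_Hfun Pm g hK hPnn hProw r hr0 hr hr2 hg
  have hne : (univ : Finset (Fin K)).Nonempty := ⟨⟨0, hK⟩, mem_univ _⟩
  obtain ⟨mx, -, hmx⟩ := Finset.exists_max_image univ (Hfun Pm g m) hne
  obtain ⟨mn, -, hmn⟩ := Finset.exists_min_image univ (Hfun Pm g m) hne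
  have hr1 : 0 < 1 - r := by linarith
  have hc0 : (0:ℝ) ≤ c := by positivity
  have hstep1 : ∑ a, π a * Qfun Pm g L m a
      ≤ Real.exp (m * (L ^ 2 * c ^ 2 / 8)) * ∑ a, π a * Real.exp (L * Hfun Pm g m a) := by
    rw [Finset.mul_sum]
    apply Finset.sum_le_sum
    intro a _
    calc π a * Qfun Pm g L m a
        ≤ π a * Real.exp (L * Hfun Pm g m a + m * (L ^ 2 * c ^ 2 / 8)) :=
          mul_le_mul_of_nonneg_left
            (Qfun_le Pm g hK hPnn hProw r hr0 hr hr2 hg L m a) (hπnn a)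
      _ = Real.exp (m * (L ^ 2 * c ^ 2 / 8)) * (π a * Real.exp (L * Hfun Pm g m a)) := by
          rw [Real.exp_add]; ring
  have hstep2 : ∑ a, π a * Real.exp (L * Hfun Pm g m a)
      ≤ Real.exp (L * S + L ^ 2 * c ^ 2 / 8) := by
    have hmean : ∑ a, π a * (Hfun Pm g m a - S) = 0 := by
      simp only [mul_sub, Finset.sum_sub_distrib, hSH, ← Finset.sum_mul, hπsum]
      ring
    have happ := hoeffding_sum π (fun a => Hfun Pm g m a - S) hπnn hπsum hmean
      (Hfun Pm g m mn - S) (Hfun Pm g m mx - S)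
      (fun a => ⟨sub_le_sub_right (hmn a (mem_univ a)) _,
        sub_le_sub_right (hmx a (mem_univ a)) _⟩) L
    have hre : ∑ a, π a * Real.exp (L * Hfun Pm g m a)
        = Real.exp (L * S) * ∑ a, π a * Real.exp (L * (Hfun Pm g m a - S)) := by
      rw [Finset.mul_sum]
      apply Finset.sum_congr rfl
      intro a _
      rw [mul_left_comm, ← Real.exp_add]
      congr 2
      ring
    rw [hre]
    have hB : L ^ 2 * (Hfun Pm g m mx - S - (Hfun Pm g m mn - S)) ^ 2 / 8
        ≤ L ^ 2 * c ^ 2 / 8 := by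
      have h2 : 0 ≤ Hfun Pm g m mx - Hfun Pm g m mn := by
        linarith [hmn mx (mem_univ mx)]
      have h3 : Hfun Pm g m mx - Hfun Pm g m mn ≤ c := by
        have := hosc m mx mn
        rw [abs_le] at this
        rw [hc]
        linarith [this.2]
      have hL2 : (0:ℝ) ≤ L ^ 2 := sq_nonneg L
      have h4 : Hfun Pm g m mx - S - (Hfun Pm g m mn - S)
          = Hfun Pm g m mx - Hfun Pm g m mn := by ring
      rw [h4]
      have h5 : (Hfun Pm g m mx - Hfun Pm g m mn) ^ 2 ≤ c ^ 2 := by nlinarith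
      nlinarith [mul_le_mul_of_nonneg_left h5 hL2]
    calc Real.exp (L * S) * ∑ a, π a * Real.exp (L * (Hfun Pm g m a - S))
        ≤ Real.exp (L * S) * Real.exp (L ^ 2
            * (Hfun Pm g m mx - S - (Hfun Pm g m mn - S)) ^ 2 / 8) :=
          mul_le_mul_of_nonneg_left happ (Real.exp_pos _).le
      _ ≤ Real.exp (L * S) * Real.exp (L ^ 2 * c ^ 2 / 8) :=
          mul_le_mul_of_nonneg_left (Real.exp_le_exp.2 hB) (Real.exp_pos _).le
      _ = Real.exp (L * S + L ^ 2 * c ^ 2 / 8) := by rw [← Real.exp_add]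
  calc ∑ a, π a * Qfun Pm g L m a
      ≤ Real.exp (m * (L ^ 2 * c ^ 2 / 8)) * ∑ a, π a * Real.exp (L * Hfun Pm g m a) :=
        hstep1
    _ ≤ Real.exp (m * (L ^ 2 * c ^ 2 / 8)) * Real.exp (L * S + L ^ 2 * c ^ 2 / 8) :=
        mul_le_mul_of_nonneg_left hstep2 (Real.exp_pos _).le
    _ = Real.exp (L * S + (m + 1 : ℕ) * (L ^ 2 * c ^ 2 / 8)) := by
        rw [← Real.exp_add]
        congr 1
        push_cast
        ring

end mgf


section chernoff
variable {K : ℕ} (Pm : Fin K → Fin K → ℝ) (π : Fin K → ℝ) (g : Fin K → ℝ)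

/-- Generic Chernoff: one-sided deviation bound, `s = ±1` handled via two lemmas. -/
lemma chernoff_gen (hK : 0 < K) (hPnn : ∀ i j, 0 ≤ Pm i j) (hProw : ∀ i, ∑ j, Pm i j = 1)
    (r : ℝ) (hr0 : 0 ≤ r) (hr : r < 1) (hr2 : ∀ i j, (1 / 2) * ∑ l, |Pm i l - Pm j l| ≤ r)
    (hπnn : ∀ i, 0 ≤ π i) (hπsum : ∑ i, π i = 1) (hπstat : ∀ j, ∑ i, π i * Pm i j = π j)
    (hg : ∀ a, g a ∈ Set.Icc (0:ℝ) 1) (t : ℝ) (ht : 0 ≤ t) (m : ℕ) (σsign : ℝ)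
    (hσ : σsign = 1 ∨ σsign = -1) :
    chainProb π Pm {x : Fin (m + 1) → Fin K |
        (m + 1 : ℕ) * t ≤ σsign * (∑ k, g (x k) - (m + 1 : ℕ) * ∑ a, π a * g a) }
      ≤ Real.exp (-(2 * (m + 1 : ℕ) * t ^ 2 * (1 - r) ^ 2)) := by
  have hr1 : 0 < 1 - r := by linarith
  set G : ℝ := ∑ a, π a * g a with hG
  set L : ℝ := σsign * (4 * t * (1 - r) ^ 2) with hL
  have hσLt : σsign * L = 4 * t * (1 - r) ^ 2 := by
    rcases hσ with h | h <;> rw [hL, h] <;> ring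
  have hLσ : 0 ≤ σsign * L := by
    rw [hσLt]; positivity
  -- pointwise: indicator ≤ exp(L * σ - L*(m+1)*G - σsign*L*(m+1)*t)
  have hpt : ∀ x : Fin (m + 1) → Fin K,
      (if x ∈ {x : Fin (m + 1) → Fin K |
          (m + 1 : ℕ) * t ≤ σsign * (∑ k, g (x k) - (m + 1 : ℕ) * G)} then
        chainMass π Pm x else 0)
      ≤ chainMass π Pm x *
          Real.exp (L * ∑ k, g (x k) - L * ((m + 1 : ℕ) * G) - σsign * L * ((m + 1 : ℕ) * t)) := by
    intro x
    have hmass := chainMass_nonneg Pm π hπnn hPnn x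
    split
    · rename_i hx
      simp only [Set.mem_setOf_eq] at hx
      have harg : 0 ≤ L * ∑ k, g (x k) - L * ((m + 1 : ℕ) * G) - σsign * L * ((m + 1 : ℕ) * t) := by
        have hLs : L * ∑ k, g (x k) - L * ((m + 1 : ℕ) * G)
            = (σsign * L) * (σsign * (∑ k, g (x k) - (m + 1 : ℕ) * G)) := by
          rcases hσ with h | h <;> rw [h] <;> ring
        rw [hLs]
        have := mul_le_mul_of_nonneg_left hx hLσ
        nlinarith
      calc chainMass π Pm x = chainMass π Pm x * 1 := (mul_one _).symm
        _ ≤ _ := mul_le_mul_of_nonneg_left (Real.one_le_exp harg) hmass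
    · positivity
  have hsum : chainProb π Pm {x : Fin (m + 1) → Fin K |
      (m + 1 : ℕ) * t ≤ σsign * (∑ k, g (x k) - (m + 1 : ℕ) * G)}
      ≤ Real.exp (- L * ((m + 1 : ℕ) * G) - σsign * L * ((m + 1 : ℕ) * t)) *
        ∑ x : Fin (m + 1) → Fin K, chainMass π Pm x * Real.exp (L * ∑ k, g (x k)) := by
    unfold chainProb
    calc ∑ x : Fin (m + 1) → Fin K, (if x ∈ {x : Fin (m + 1) → Fin K |
            (m + 1 : ℕ) * t ≤ σsign * (∑ k, g (x k) - (m + 1 : ℕ) * G)} then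
          chainMass π Pm x else 0)
        ≤ ∑ x : Fin (m + 1) → Fin K, chainMass π Pm x *
            Real.exp (L * ∑ k, g (x k) - L * ((m + 1 : ℕ) * G) - σsign * L * ((m + 1 : ℕ) * t)) :=
          Finset.sum_le_sum (fun x _ => hpt x)
      _ = ∑ x : Fin (m + 1) → Fin K,
            Real.exp (- L * ((m + 1 : ℕ) * G) - σsign * L * ((m + 1 : ℕ) * t)) *
              (chainMass π Pm x * Real.exp (L * ∑ k, g (x k))) := by
          apply Finset.sum_congr rfl
          intro x _
          rw [show L * ∑ k, g (x k) - L * ((m + 1 : ℕ) * G) - σsign * L * ((m + 1 : ℕ) * t)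
              = (- L * ((m + 1 : ℕ) * G) - σsign * L * ((m + 1 : ℕ) * t)) + L * ∑ k, g (x k)
            from by ring, Real.exp_add]
          ring
      _ = _ := (Finset.mul_sum ..).symm
  have hmgf := mgf_pi Pm π g hK hPnn hProw r hr0 hr hr2 hπnn hπsum hπstat hg L m
  calc chainProb π Pm {x : Fin (m + 1) → Fin K |
        (m + 1 : ℕ) * t ≤ σsign * (∑ k, g (x k) - (m + 1 : ℕ) * G)}
      ≤ Real.exp (- L * ((m + 1 : ℕ) * G) - σsign * L * ((m + 1 : ℕ) * t)) *
        ∑ x : Fin (m + 1) → Fin K, chainMass π Pm x * Real.exp (L * ∑ k, g (x k)) := hsum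
    _ ≤ Real.exp (- L * ((m + 1 : ℕ) * G) - σsign * L * ((m + 1 : ℕ) * t)) *
        Real.exp (L * ((m + 1 : ℕ) * G) + (m + 1 : ℕ) * (L ^ 2 * (1 / (1 - r)) ^ 2 / 8)) :=
        mul_le_mul_of_nonneg_left hmgf (Real.exp_pos _).le
    _ = Real.exp (-(2 * (m + 1 : ℕ) * t ^ 2 * (1 - r) ^ 2)) := by
        rw [← Real.exp_add]
        congr 1
        have hs2 : σsign ^ 2 = 1 := by rcases hσ with h | h <;> rw [h] <;> norm_num
        have hL2 : L ^ 2 = 16 * t ^ 2 * (1 - r) ^ 4 := by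
          rw [hL, mul_pow, hs2]
          ring
        rw [hL2, hσLt]
        have h8 : (1 / (1 - r)) ^ 2 = 1 / (1 - r) ^ 2 := by
          rw [div_pow]
          norm_num
        rw [h8]
        field_simp
        ring
end chernoff


lemma chainMass_factor {K n : ℕ} (Pm : Fin K → Fin K → ℝ) (hn : 0 < n)
    (f μ : Fin K → ℝ) (x : Fin n → Fin K) :
    chainMass (fun b => f b * μ b) Pm x = f (x ⟨0, hn⟩) * chainMass μ Pm x := by
  unfold chainMass
  rw [dif_pos hn, dif_pos hn]
  ring


theorem stmt15 {K n : ℕ} (hK : 0 < K) (hn : 0 < n)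
    (Pm : Fin K → Fin K → ℝ)
    (hPnn : ∀ i j, 0 ≤ Pm i j) (hProw : ∀ i, ∑ j, Pm i j = 1)
    (r : ℝ) (hrdef : r = dobrushin Pm) (hr : r < 1)
    (ϱ : Fin K → ℝ) (hϱnn : ∀ i, 0 ≤ ϱ i) (hϱsum : ∑ i, ϱ i = 1)
    (π : Fin K → ℝ) (hπpos : ∀ i, 0 < π i) (hπsum : ∑ i, π i = 1)
    (hπstat : ∀ j, ∑ i, π i * Pm i j = π j)
    (p : ℝ) (hp : 1 ≤ p) (ε : ℝ) (hε : 0 < ε) :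
    chainProb ϱ Pm {x : Fin n → Fin K | ε ≤ lpNorm p (fun i => empMeas x i - π i)} ≤
      Real.sqrt (2 * K) * nsIndex ϱ π *
        Real.exp (-((K : ℝ) ^ (-(2 / p)) * n * ε ^ 2 * (1 - r) ^ 2)) := by
  obtain ⟨m, rfl⟩ : ∃ m, n = m + 1 := ⟨n - 1, by omega⟩
  -- Dobrushin coefficient facts
  have hr2 : ∀ i j, (1 / 2) * ∑ l, |Pm i l - Pm j l| ≤ r := by
    intro i j
    rw [hrdef]
    unfold dobrushin
    have h1 : (1 / 2 : ℝ) * ∑ l, |Pm i l - Pm j l|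
        ≤ ⨆ j, (1 / 2) * ∑ l, |Pm i l - Pm j l| :=
      le_ciSup (f := fun j => (1 / 2 : ℝ) * ∑ l, |Pm i l - Pm j l|)
        (Set.Finite.bddAbove (Set.finite_range _)) j
    exact le_trans h1 (le_ciSup (f := fun i => ⨆ j, (1 / 2 : ℝ) * ∑ l, |Pm i l - Pm j l|)
      (Set.Finite.bddAbove (Set.finite_range _)) i)
  have hr0 : 0 ≤ r := by
    have := hr2 ⟨0, hK⟩ ⟨0, hK⟩
    simpa using this
  have hr1 : 0 < 1 - r := by linarith
  have hπnn : ∀ i, 0 ≤ π i := fun i => (hπpos i).le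
  have hp0 : 0 < p := lt_of_lt_of_le one_pos hp
  have hKR : (0:ℝ) < K := by exact_mod_cast hK
  -- the threshold t
  set t : ℝ := ε * (K : ℝ) ^ (-(1/p)) with htdef
  have htpos : 0 < t := mul_pos hε (Real.rpow_pos_of_pos hKR _)
  have ht2 : t ^ 2 = ε ^ 2 * (K : ℝ) ^ (-(2/p)) := by
    rw [htdef, mul_pow, ← Real.rpow_natCast ((K:ℝ) ^ (-(1/p))) 2, ← Real.rpow_mul hKR.le]
    rw [show -(1/p) * ((2:ℕ):ℝ) = -(2/p) by push_cast; ring]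
  -- indicator functions
  set g : Fin K → Fin K → ℝ := fun i a => if a = i then (1:ℝ) else 0 with hgdef
  have hg01 : ∀ i a, g i a ∈ Set.Icc (0:ℝ) 1 := by
    intro i a
    constructor <;> simp [hgdef] <;> split <;> norm_num
  have hπg : ∀ i, ∑ a, π a * g i a = π i := by
    intro i
    simp [hgdef, mul_ite]
  have hσemp : ∀ (i : Fin K) (x : Fin (m+1) → Fin K),
      ∑ k, g i (x k) = (m + 1 : ℕ) * empMeas x i := by
    intro i x
    unfold empMeas
    rw [hgdef]
    field_simp
  -- event inclusion: x ∈ E → ∃ i and sign, Chernoff event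
  set E : Set (Fin (m+1) → Fin K) :=
    {x : Fin (m+1) → Fin K | ε ≤ lpNorm p (fun i => empMeas x i - π i)} with hE
  have hincl : ∀ x ∈ E, ∃ i : Fin K, t ≤ |empMeas x i - π i| := by
    intro x hx
    rw [hE, Set.mem_setOf_eq] at hx
    set y : Fin K → ℝ := fun i => empMeas x i - π i with hy
    have hS0 : ∀ i, (0:ℝ) ≤ |y i| ^ p := fun i => Real.rpow_nonneg (abs_nonneg _) p
    have hSnn : (0:ℝ) ≤ ∑ i, |y i| ^ p := Finset.sum_nonneg (fun i _ => hS0 i)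
    have hSp : ε ^ p ≤ ∑ i, |y i| ^ p := by
      have h1 := Real.rpow_le_rpow hε.le hx hp0.le
      rwa [lpNorm, ← Real.rpow_mul hSnn, one_div_mul_cancel hp0.ne', Real.rpow_one] at h1
    by_contra hcon
    push_neg at hcon
    have hcon' : ∀ i, |y i| ^ p < ε ^ p / K := by
      intro i
      have h2 : |y i| < t := hcon i
      by_contra h3
      push_neg at h3
      have h4 : (ε ^ p / K) ^ (1/p) ≤ (|y i| ^ p) ^ (1/p) :=
        Real.rpow_le_rpow (by positivity) h3 (by positivity)
      rw [← Real.rpow_mul (abs_nonneg _), mul_one_div_cancel hp0.ne', Real.rpow_one] at h4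
      have h5 : (ε ^ p / K) ^ (1/p) = t := by
        rw [Real.div_rpow (by positivity) hKR.le, ← Real.rpow_mul hε.le,
          mul_one_div_cancel hp0.ne', Real.rpow_one, htdef, Real.rpow_neg hKR.le,
          div_eq_mul_inv]
      rw [h5] at h4
      exact absurd h4 (not_le.2 h2)
    have hlt : ∑ i, |y i| ^ p < ∑ _i : Fin K, ε ^ p / K :=
      Finset.sum_lt_sum_of_nonempty ⟨⟨0, hK⟩, mem_univ _⟩ (fun i _ => hcon' i)
    rw [Finset.sum_const, card_univ, Fintype.card_fin, nsmul_eq_mul,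
      mul_div_cancel₀ _ (ne_of_gt hKR)] at hlt
    exact absurd hSp (not_le.2 hlt)
  -- union bound events
  have hBnn : ∀ (x : Fin (m+1) → Fin K) (S : Set (Fin (m+1) → Fin K)),
      0 ≤ (if x ∈ S then chainMass π Pm x else 0) := by
    intro x S
    split
    · exact chainMass_nonneg Pm π hπnn hPnn x
    · exact le_refl 0
  set B : Fin K → ℝ → Set (Fin (m+1) → Fin K) := fun i s =>
    {x | (m+1:ℕ) * t ≤ s * (∑ k, g i (x k) - (m+1:ℕ) * ∑ a, π a * g i a)} with hB
  have hmem : ∀ x ∈ E, ∃ i, x ∈ B i 1 ∨ x ∈ B i (-1) := by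
    intro x hx
    obtain ⟨i, hi⟩ := hincl x hx
    refine ⟨i, ?_⟩
    have hm1 : (0:ℝ) < (m+1:ℕ) := by positivity
    have hrw : ∑ k, g i (x k) - (m+1:ℕ) * ∑ a, π a * g i a
        = (m+1:ℕ) * (empMeas x i - π i) := by
      rw [hσemp i x, hπg i]
      ring
    rcases le_abs.1 hi with h | h
    · left
      rw [hB]
      simp only [Set.mem_setOf_eq]
      rw [hrw, one_mul]
      exact mul_le_mul_of_nonneg_left h hm1.le
    · right
      rw [hB]
      simp only [Set.mem_setOf_eq]
      rw [hrw]
      have : (m+1:ℕ) * t ≤ (m+1:ℕ) * -(empMeas x i - π i) :=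
        mul_le_mul_of_nonneg_left h hm1.le
      linarith
  -- union bound
  have hPiE : chainProb π Pm E ≤
      2 * K * Real.exp (-(2 * (m+1:ℕ) * t ^ 2 * (1 - r) ^ 2)) := by
    have hpt : ∀ x : Fin (m+1) → Fin K,
        (if x ∈ E then chainMass π Pm x else 0)
        ≤ ∑ i : Fin K, ((if x ∈ B i 1 then chainMass π Pm x else 0)
            + (if x ∈ B i (-1) then chainMass π Pm x else 0)) := by
      intro x
      by_cases hx : x ∈ E
      · rw [if_pos hx]
        obtain ⟨i, hi⟩ := hmem x hx
        have hterm : chainMass π Pm x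
            ≤ (if x ∈ B i 1 then chainMass π Pm x else 0)
              + (if x ∈ B i (-1) then chainMass π Pm x else 0) := by
          rcases hi with h | h
          · rw [if_pos h]
            have := hBnn x (B i (-1))
            linarith
          · rw [if_pos h]
            have := hBnn x (B i 1)
            linarith
        refine le_trans hterm (Finset.single_le_sum (f := fun i =>
          (if x ∈ B i 1 then chainMass π Pm x else 0)
            + (if x ∈ B i (-1) then chainMass π Pm x else 0)) ?_ (mem_univ i))
        intro j _
        exact add_nonneg (hBnn x (B j 1)) (hBnn x (B j (-1)))
      · rw [if_neg hx]
        apply Finset.sum_nonneg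
        intro j _
        exact add_nonneg (hBnn x (B j 1)) (hBnn x (B j (-1)))
    have hswap : chainProb π Pm E ≤
        ∑ i : Fin K, (chainProb π Pm (B i 1) + chainProb π Pm (B i (-1))) := by
      unfold chainProb
      calc ∑ x : Fin (m+1) → Fin K, (if x ∈ E then chainMass π Pm x else 0)
          ≤ ∑ x : Fin (m+1) → Fin K, ∑ i : Fin K,
              ((if x ∈ B i 1 then chainMass π Pm x else 0)
                + (if x ∈ B i (-1) then chainMass π Pm x else 0)) :=
            Finset.sum_le_sum (fun x _ => hpt x)
        _ = ∑ i : Fin K, ∑ x : Fin (m+1) → Fin K,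
              ((if x ∈ B i 1 then chainMass π Pm x else 0)
                + (if x ∈ B i (-1) then chainMass π Pm x else 0)) := Finset.sum_comm
        _ = ∑ i : Fin K, ((∑ x : Fin (m+1) → Fin K,
              (if x ∈ B i 1 then chainMass π Pm x else 0))
              + ∑ x : Fin (m+1) → Fin K,
                (if x ∈ B i (-1) then chainMass π Pm x else 0)) := by
            exact Finset.sum_congr rfl (fun i _ => Finset.sum_add_distrib)
    have hbound : ∀ (i : Fin K) (s : ℝ), s = 1 ∨ s = -1 →
        chainProb π Pm (B i s) ≤ Real.exp (-(2 * (m+1:ℕ) * t ^ 2 * (1 - r) ^ 2)) := by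
      intro i s hs
      exact chernoff_gen Pm π (g i) hK hPnn hProw r hr0 hr hr2 hπnn hπsum hπstat
        (hg01 i) t htpos.le m s hs
    calc chainProb π Pm E
        ≤ ∑ i : Fin K, (chainProb π Pm (B i 1) + chainProb π Pm (B i (-1))) := hswap
      _ ≤ ∑ _i : Fin K, (Real.exp (-(2 * (m+1:ℕ) * t ^ 2 * (1 - r) ^ 2))
            + Real.exp (-(2 * (m+1:ℕ) * t ^ 2 * (1 - r) ^ 2))) :=
          Finset.sum_le_sum (fun i _ =>
            add_le_add (hbound i 1 (Or.inl rfl)) (hbound i (-1) (Or.inr rfl)))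
      _ = 2 * K * Real.exp (-(2 * (m+1:ℕ) * t ^ 2 * (1 - r) ^ 2)) := by
          rw [Finset.sum_const, card_univ, Fintype.card_fin, nsmul_eq_mul]
          ring
  -- Cauchy–Schwarz change of measure
  have hmassfac : ∀ x : Fin (m+1) → Fin K,
      chainMass ϱ Pm x = (ϱ (x ⟨0, hn⟩) / π (x ⟨0, hn⟩)) * chainMass π Pm x := by
    intro x
    have : ϱ = fun b => (ϱ b / π b) * π b := by
      funext b
      rw [div_mul_cancel₀ _ (hπpos b).ne']
    conv_lhs => rw [this]
    exact chainMass_factor Pm hn (fun b => ϱ b / π b) π x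
  set u : (Fin (m+1) → Fin K) → ℝ :=
    fun x => (if x ∈ E then (1:ℝ) else 0) * Real.sqrt (chainMass π Pm x) with hu
  set w : (Fin (m+1) → Fin K) → ℝ :=
    fun x => (ϱ (x ⟨0, hn⟩) / π (x ⟨0, hn⟩)) * Real.sqrt (chainMass π Pm x) with hw
  have hmassnn : ∀ x : Fin (m+1) → Fin K, 0 ≤ chainMass π Pm x :=
    fun x => chainMass_nonneg Pm π hπnn hPnn x
  have huw : ∀ x, u x * w x = (if x ∈ E then chainMass ϱ Pm x else 0) := by
    intro x
    simp only [hu, hw]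
    by_cases hx : x ∈ E
    · rw [if_pos hx, if_pos hx, hmassfac x]
      have : Real.sqrt (chainMass π Pm x) * Real.sqrt (chainMass π Pm x)
          = chainMass π Pm x := Real.mul_self_sqrt (hmassnn x)
      calc (1:ℝ) * Real.sqrt (chainMass π Pm x) *
            ((ϱ (x ⟨0, hn⟩) / π (x ⟨0, hn⟩)) * Real.sqrt (chainMass π Pm x))
          = (ϱ (x ⟨0, hn⟩) / π (x ⟨0, hn⟩)) *
            (Real.sqrt (chainMass π Pm x) * Real.sqrt (chainMass π Pm x)) := by ring
        _ = (ϱ (x ⟨0, hn⟩) / π (x ⟨0, hn⟩)) * chainMass π Pm x := by rw [this]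
    · rw [if_neg hx, if_neg hx]
      ring
  have hsum_uw : ∑ x : Fin (m+1) → Fin K, u x * w x = chainProb ϱ Pm E := by
    unfold chainProb
    exact Finset.sum_congr rfl (fun x _ => huw x)
  have hu2 : ∑ x : Fin (m+1) → Fin K, u x ^ 2 = chainProb π Pm E := by
    unfold chainProb
    apply Finset.sum_congr rfl
    intro x _
    simp only [hu]
    by_cases hx : x ∈ E
    · rw [if_pos hx, if_pos hx, one_mul, Real.sq_sqrt (hmassnn x)]
    · rw [if_neg hx, if_neg hx]
      ring
  have hw2 : ∑ x : Fin (m+1) → Fin K, w x ^ 2 = ∑ i, ϱ i ^ 2 / π i := by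
    have hterm : ∀ x : Fin (m+1) → Fin K, w x ^ 2
        = chainMass (fun b => (ϱ b / π b) ^ 2 * π b) Pm x := by
      intro x
      simp only [hw]
      rw [mul_pow, Real.sq_sqrt (hmassnn x),
        chainMass_factor Pm hn (fun b => (ϱ b / π b) ^ 2) π x]
    rw [Finset.sum_congr rfl (fun x _ => hterm x), mass_sum Pm hProw m]
    apply Finset.sum_congr rfl
    intro b _
    have hb : π b ≠ 0 := (hπpos b).ne'
    rw [div_pow]
    field_simp
  have hprobnn : 0 ≤ chainProb ϱ Pm E := by
    unfold chainProb
    apply Finset.sum_nonneg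
    intro x _
    split
    · exact chainMass_nonneg Pm ϱ hϱnn hPnn x
    · exact le_refl 0
  have hCS : chainProb ϱ Pm E ≤ Real.sqrt (chainProb π Pm E) * nsIndex ϱ π := by
    have hcs := Finset.sum_mul_sq_le_sq_mul_sq univ u w
    have h1 := Real.sqrt_le_sqrt hcs
    rw [Real.sqrt_sq (hsum_uw ▸ hprobnn)] at h1
    rw [hsum_uw] at h1
    rw [Real.sqrt_mul (hu2 ▸ (by
      apply Finset.sum_nonneg
      intro x _
      exact sq_nonneg (u x) : (0:ℝ) ≤ ∑ x : Fin (m+1) → Fin K, u x ^ 2)), hu2, hw2] at h1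
    exact h1
  -- final combination
  have hpiEnn : 0 ≤ chainProb π Pm E := by
    unfold chainProb
    apply Finset.sum_nonneg
    intro x _
    exact hBnn x E
  have hsqrtPiE : Real.sqrt (chainProb π Pm E)
      ≤ Real.sqrt (2 * K) * Real.exp (-((m+1:ℕ) * t ^ 2 * (1 - r) ^ 2)) := by
    have h1 := Real.sqrt_le_sqrt hPiE
    have h2 : Real.exp (-(2 * (m+1:ℕ) * t ^ 2 * (1 - r) ^ 2))
        = Real.exp (-((m+1:ℕ) * t ^ 2 * (1 - r) ^ 2)) *
          Real.exp (-((m+1:ℕ) * t ^ 2 * (1 - r) ^ 2)) := by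
      rw [← Real.exp_add]
      congr 1
      ring
    rw [show (2:ℝ) * K * Real.exp (-(2 * (m+1:ℕ) * t ^ 2 * (1 - r) ^ 2))
        = 2 * K * (Real.exp (-((m+1:ℕ) * t ^ 2 * (1 - r) ^ 2)) *
            Real.exp (-((m+1:ℕ) * t ^ 2 * (1 - r) ^ 2))) from by rw [← h2],
      Real.sqrt_mul (by positivity)] at h1
    rw [Real.sqrt_mul_self (Real.exp_pos _).le] at h1
    exact h1
  have hns : 0 ≤ nsIndex ϱ π := Real.sqrt_nonneg _
  calc chainProb ϱ Pm E
      ≤ Real.sqrt (chainProb π Pm E) * nsIndex ϱ π := hCS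
    _ ≤ (Real.sqrt (2 * K) * Real.exp (-((m+1:ℕ) * t ^ 2 * (1 - r) ^ 2))) * nsIndex ϱ π :=
        mul_le_mul_of_nonneg_right hsqrtPiE hns
    _ = Real.sqrt (2 * K) * nsIndex ϱ π *
        Real.exp (-((K : ℝ) ^ (-(2 / p)) * (m+1:ℕ) * ε ^ 2 * (1 - r) ^ 2)) := by
        rw [show -((m+1:ℕ) * t ^ 2 * (1 - r) ^ 2)
            = -((K : ℝ) ^ (-(2 / p)) * (m+1:ℕ) * ε ^ 2 * (1 - r) ^ 2) from by rw [ht2]; ring]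
        ring
end
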